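/- arXiv:0708.2227 — 8 statements merged into one kernel-verified Lean document; each statement's English description precedes it below -/
import Mathlib

section
/- Let 1 ≤ p < 2, d ≥ 1, s > d(2−p)/p and 0 < b < ∞. There is a constant C, depending only on d, p, s and b, such that for all nonnegative measurable functions f, k : ℝ^d → [0, ∞) with f ∈ L_1(μ_s) and k ∈ L_1(μ_s), and all h ∈ (0, b], ∫_{ℝ^d} (k_h * f)^{p/2}(y) dy ≤ C (‖f‖_{L_1(μ_s)} ‖k‖_{L_1(μ_s)})^{p/2}, where * denotes convolution. -/
/-!
Put `q = p / 2 < 1`, `w(x) = (1 + ‖x‖)^s` and `G = k_h * f`. Hölder's inequality with exponents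
`1/q` and `1/(1 - q)`, applied to `G^q = (G w)^q · w^(-q)`, gives
`∫ G^q ≤ (∫ G w)^q (∫ w^(-q/(1-q)))^(1-q)`, and the last integral is finite exactly when
`s q/(1 - q) > d`, i.e. `s > d(2 - p)/p`. Since `w` is submultiplicative, `∫ G w` is at most the
product of the weighted `L¹` norms of `k_h` and `f`; and since `h^(1/d) ≤ (max 1 b)^(1/d)`,
passing from `k` to its `L¹`-normalised dilation `k_h` multiplies the weighted norm by at most
`(max 1 b)^(s/d)`.
-/

open MeasureTheory Module
open scoped ENNReal

namespace MeasureTheory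

section Convolution

variable {G : Type*} [AddGroup G] {mG : MeasurableSpace G} {μ : Measure G}

theorem lconvolution_mul_le_of_add_le_mul {f g w : G → ℝ≥0∞}
    (hw : ∀ x y, w (x + y) ≤ w x * w y) (x : G) :
    (f ⋆ₗ[μ] g) x * w x ≤ ((fun y => f y * w y) ⋆ₗ[μ] (fun y => g y * w y)) x := by
  refine (lintegral_mul_const_le _ _).trans (lintegral_mono fun y => ?_)
  calc f y * g (-y + x) * w x ≤ f y * g (-y + x) * (w y * w (-y + x)) := by
        gcongr; simpa using hw y (-y + x)
    _ = f y * w y * (g (-y + x) * w (-y + x)) := by ring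

variable [MeasurableAdd₂ G] [MeasurableNeg G] [SFinite μ] [μ.IsAddLeftInvariant]

theorem lintegral_lconvolution {f g : G → ℝ≥0∞} (hf : AEMeasurable f μ)
    (hg : AEMeasurable g μ) :
    ∫⁻ x, (f ⋆ₗ[μ] g) x ∂μ = (∫⁻ x, f x ∂μ) * ∫⁻ x, g x ∂μ := by
  simp only [lconvolution_def]
  rw [lintegral_lintegral_swap]
  · have hg_shift : ∀ y, AEMeasurable (fun x => g (-y + x)) μ := fun y =>
      hg.comp_quasiMeasurePreserving (measurePreserving_add_left μ (-y)).quasiMeasurePreserving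
    simp_rw [lintegral_const_mul'' _ (hg_shift _), lintegral_add_left_eq_self]
    exact lintegral_mul_const'' _ hf
  · fun_prop

theorem lintegral_lconvolution_mul_le {f g w : G → ℝ≥0∞} (hf : AEMeasurable f μ)
    (hg : AEMeasurable g μ) (hw : AEMeasurable w μ) (hw_add : ∀ x y, w (x + y) ≤ w x * w y) :
    ∫⁻ x, (f ⋆ₗ[μ] g) x * w x ∂μ ≤ (∫⁻ x, f x * w x ∂μ) * ∫⁻ x, g x * w x ∂μ :=
  (lintegral_mono (lconvolution_mul_le_of_add_le_mul hw_add)).trans_eq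
    (lintegral_lconvolution (hf.mul hw) (hg.mul hw))

end Convolution

theorem lintegral_rpow_le_lintegral_mul_rpow_mul {α : Type*} [MeasurableSpace α]
    (μ : Measure α) {q : ℝ} (hq0 : 0 < q) (hq1 : q < 1) {f w : α → ℝ≥0∞}
    (hf : AEMeasurable f μ) (hw : AEMeasurable w μ) (hw0 : ∀ x, w x ≠ 0) (hw_top : ∀ x, w x ≠ ∞) :
    ∫⁻ x, f x ^ q ∂μ ≤
      (∫⁻ x, f x * w x ∂μ) ^ q * (∫⁻ x, w x ^ (-(q / (1 - q))) ∂μ) ^ (1 - q) := by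
  have hconj : (1 / q).HolderConjugate (1 / (1 - q)) :=
    Real.holderConjugate_iff.mpr ⟨by rw [lt_div_iff₀ hq0]; linarith, by field_simp; ring⟩
  have hsplit : ∀ x, f x ^ q = (f x * w x) ^ q * w x ^ (-q) := fun x => by
    rw [ENNReal.mul_rpow_of_nonneg _ _ hq0.le, mul_assoc,
      ← ENNReal.rpow_add _ _ (hw0 x) (hw_top x), add_neg_cancel, ENNReal.rpow_zero, mul_one]
  calc ∫⁻ x, f x ^ q ∂μ = ∫⁻ x, ((fun x => (f x * w x) ^ q) * fun x => w x ^ (-q)) x ∂μ :=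
        lintegral_congr hsplit
    _ ≤ (∫⁻ x, ((f x * w x) ^ q) ^ (1 / q) ∂μ) ^ (1 / (1 / q)) *
        (∫⁻ x, (w x ^ (-q)) ^ (1 / (1 - q)) ∂μ) ^ (1 / (1 / (1 - q))) :=
        ENNReal.lintegral_mul_le_Lp_mul_Lq μ hconj ((hf.mul hw).pow_const _) (hw.pow_const _)
    _ = _ := by
        simp_rw [← ENNReal.rpow_mul, one_div_one_div, mul_one_div_cancel hq0.ne',
          ENNReal.rpow_one, neg_mul, mul_one_div]

end MeasureTheory

section PolyWeight

variable {E : Type*} [SeminormedAddCommGroup E]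

/-- The density of `μ_s` with respect to Lebesgue measure. -/
noncomputable def polyWeight (s : ℝ) (x : E) : ℝ≥0∞ := ENNReal.ofReal ((1 + ‖x‖) ^ s)

theorem polyWeight_ne_zero (s : ℝ) (x : E) : polyWeight s x ≠ 0 := by
  rw [polyWeight, ne_eq, ENNReal.ofReal_eq_zero, not_le]
  positivity

theorem polyWeight_ne_top (s : ℝ) (x : E) : polyWeight s x ≠ ∞ := ENNReal.ofReal_ne_top

@[fun_prop]
theorem measurable_polyWeight [MeasurableSpace E] [OpensMeasurableSpace E] (s : ℝ) :
    Measurable (polyWeight (E := E) s) := by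
  unfold polyWeight
  fun_prop

theorem polyWeight_rpow (s t : ℝ) (x : E) : polyWeight s x ^ t = polyWeight (s * t) x := by
  rw [polyWeight, polyWeight, ENNReal.ofReal_rpow_of_pos (by positivity),
    ← Real.rpow_mul (by positivity)]

theorem polyWeight_add_le {s : ℝ} (hs : 0 ≤ s) (x y : E) :
    polyWeight s (x + y) ≤ polyWeight s x * polyWeight s y := by
  rw [polyWeight, polyWeight, polyWeight, ← ENNReal.ofReal_mul (by positivity),
    ← Real.mul_rpow (by positivity) (by positivity)]
  gcongr
  nlinarith [norm_add_le x y, norm_nonneg x, norm_nonneg y]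

theorem polyWeight_smul_le [NormedSpace ℝ E] {s c M : ℝ} (hs : 0 ≤ s) (hc : |c| ≤ M)
    (hM : 1 ≤ M) (x : E) : polyWeight s (c • x) ≤ ENNReal.ofReal (M ^ s) * polyWeight s x := by
  rw [polyWeight, polyWeight, ← ENNReal.ofReal_mul (by positivity),
    ← Real.mul_rpow (by positivity) (by positivity)]
  gcongr
  rw [norm_smul, Real.norm_eq_abs]
  nlinarith [norm_nonneg x, abs_nonneg c]

end PolyWeight

section Dilation

variable {E : Type*} [NormedAddCommGroup E] [NormedSpace ℝ E] [MeasurableSpace E] [BorelSpace E]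
  [FiniteDimensional ℝ E] (μ : Measure E) [μ.IsAddHaarMeasure]

theorem lintegral_comp_inv_smul_of_pos (f : E → ℝ≥0∞) {c : ℝ} (hc : 0 < c) :
    ∫⁻ x, f (c⁻¹ • x) ∂μ = ENNReal.ofReal (c ^ finrank ℝ E) * ∫⁻ x, f x ∂μ := by
  have hmap := Measure.map_addHaar_smul μ (inv_ne_zero hc.ne')
  rw [inv_pow, inv_inv, abs_of_pos (by positivity)] at hmap
  rw [← smul_eq_mul, ← lintegral_smul_measure, ← hmap]
  exact (lintegral_map_equiv f
    (Homeomorph.smulOfNeZero c⁻¹ (inv_ne_zero hc.ne')).toMeasurableEquiv).symm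

theorem lintegral_dilation_mul_polyWeight_le {f : E → ℝ≥0∞} {s c M : ℝ} (hs : 0 ≤ s)
    (hc : 0 < c) (hcM : c ≤ M) (hM : 1 ≤ M) :
    ∫⁻ x, ENNReal.ofReal (c ^ finrank ℝ E)⁻¹ * f (c⁻¹ • x) * polyWeight s x ∂μ ≤
      ENNReal.ofReal (M ^ s) * ∫⁻ x, f x * polyWeight s x ∂μ := by
  have hweight : ∀ x : E, polyWeight s x ≤ ENNReal.ofReal (M ^ s) * polyWeight s (c⁻¹ • x) :=
    fun x => by
      simpa only [smul_inv_smul₀ hc.ne'] using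
        polyWeight_smul_le hs ((abs_of_pos hc).trans_le hcM) hM (c⁻¹ • x)
  calc ∫⁻ x, ENNReal.ofReal (c ^ finrank ℝ E)⁻¹ * f (c⁻¹ • x) * polyWeight s x ∂μ
      ≤ ∫⁻ x, ENNReal.ofReal (M ^ s) * (ENNReal.ofReal (c ^ finrank ℝ E)⁻¹ *
          (f (c⁻¹ • x) * polyWeight s (c⁻¹ • x))) ∂μ :=
        lintegral_mono fun x => (mul_le_mul_right (hweight x) _).trans_eq (by ring)
    _ = ENNReal.ofReal (M ^ s) * ∫⁻ x, f x * polyWeight s x ∂μ := by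
        rw [lintegral_const_mul' _ _ ENNReal.ofReal_ne_top,
          lintegral_const_mul' _ _ ENNReal.ofReal_ne_top,
          lintegral_comp_inv_smul_of_pos μ (fun x => f x * polyWeight s x) hc,
          ← mul_assoc (ENNReal.ofReal _⁻¹),
          ← ENNReal.ofReal_mul (by positivity), inv_mul_cancel₀ (by positivity),
          ENNReal.ofReal_one, one_mul]

end Dilation

theorem ofReal_integral_rpow_le_lintegral_rpow {α : Type*} [MeasurableSpace α] {μ : Measure α}
    {g : α → ℝ} (hg : 0 ≤ g) {q : ℝ} (hq : 0 ≤ q) :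
    ENNReal.ofReal ((∫ x, g x ∂μ) ^ q) ≤ (∫⁻ x, ENNReal.ofReal (g x) ∂μ) ^ q := by
  rw [← ENNReal.ofReal_rpow_of_nonneg (integral_nonneg hg) hq]
  gcongr
  calc ENNReal.ofReal (∫ x, g x ∂μ) ≤ ‖∫ x, g x ∂μ‖ₑ := Real.ofReal_le_enorm _
    _ ≤ ∫⁻ x, ‖g x‖ₑ ∂μ := enorm_integral_le_lintegral_enorm g
    _ = ∫⁻ x, ENNReal.ofReal (g x) ∂μ := by simp_rw [Real.enorm_of_nonneg (hg _)]

theorem ofReal_integral_rpow_le_lconvolution_rpow {G : Type*} [AddCommGroup G]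
    [MeasurableSpace G] {μ : Measure G} {f κ : G → ℝ} (hf : ∀ x, 0 ≤ f x) (hκ : ∀ x, 0 ≤ κ x)
    {q : ℝ} (hq : 0 ≤ q) (y : G) :
    ENNReal.ofReal ((∫ x, κ (y - x) * f x ∂μ) ^ q) ≤
      ((fun x => ENNReal.ofReal (f x)) ⋆ₗ[μ] fun x => ENNReal.ofReal (κ x)) y ^ q := by
  refine (ofReal_integral_rpow_le_lintegral_rpow (fun x => ?_) hq).trans_eq ?_
  · exact mul_nonneg (hκ _) (hf x)
  · rw [lconvolution_def]
    congr 1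
    refine lintegral_congr fun x => ?_
    rw [ENNReal.ofReal_mul (hκ _), neg_add_eq_sub, mul_comm]

theorem ofReal_integral_one_add_norm_rpow_mul {E : Type*} [SeminormedAddCommGroup E]
    [MeasurableSpace E] {μ : Measure E} {s : ℝ} {f : E → ℝ} (hf : 0 ≤ f)
    (hi : Integrable (fun x => (1 + ‖x‖) ^ s * f x) μ) :
    ENNReal.ofReal (∫ x, (1 + ‖x‖) ^ s * f x ∂μ) =
      ∫⁻ x, ENNReal.ofReal (f x) * polyWeight s x ∂μ := by
  rw [ofReal_integral_eq_lintegral_ofReal hi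
    (ae_of_all _ fun x => mul_nonneg (by positivity) (hf x))]
  refine lintegral_congr fun x => ?_
  rw [ENNReal.ofReal_mul (by positivity), mul_comm, polyWeight]

theorem lintegral_lconvolution_rpow_le {E : Type*} [NormedAddCommGroup E] [MeasurableSpace E]
    [OpensMeasurableSpace E] [MeasurableAdd₂ E] [MeasurableNeg E] {μ : Measure E} [SFinite μ]
    [μ.IsAddLeftInvariant] {q s : ℝ} (hq0 : 0 < q) (hq1 : q < 1) (hs : 0 ≤ s)
    {f g : E → ℝ≥0∞} (hf : AEMeasurable f μ) (hg : AEMeasurable g μ) :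
    ∫⁻ x, (f ⋆ₗ[μ] g) x ^ q ∂μ ≤
      ((∫⁻ x, f x * polyWeight s x ∂μ) * ∫⁻ x, g x * polyWeight s x ∂μ) ^ q *
        (∫⁻ x, polyWeight (-(s * (q / (1 - q)))) x ∂μ) ^ (1 - q) := by
  have hw := (measurable_polyWeight (E := E) s).aemeasurable (μ := μ)
  calc ∫⁻ x, (f ⋆ₗ[μ] g) x ^ q ∂μ
      ≤ (∫⁻ x, (f ⋆ₗ[μ] g) x * polyWeight s x ∂μ) ^ q *
          (∫⁻ x, polyWeight s x ^ (-(q / (1 - q))) ∂μ) ^ (1 - q) :=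
        lintegral_rpow_le_lintegral_mul_rpow_mul μ hq0 hq1 (aemeasurable_lconvolution hf hg) hw
          (polyWeight_ne_zero s) (polyWeight_ne_top s)
    _ ≤ _ := by
        simp_rw [polyWeight_rpow, mul_neg]
        gcongr
        exact lintegral_lconvolution_mul_le hf hg hw (polyWeight_add_le hs)

theorem lt_mul_div_one_sub_half_of_div_lt {d p s : ℝ} (hp0 : 0 < p) (hp2 : p < 2)
    (hs : d * (2 - p) / p < s) : d < s * (p / 2 / (1 - p / 2)) := by
  have : s * (p / 2 / (1 - p / 2)) = s * p / (2 - p) := by field_simp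
  rw [this, lt_div_iff₀ (by linarith)]
  rw [div_lt_iff₀ hp0] at hs
  linarith

section Haar

variable {E : Type*} [NormedAddCommGroup E] [NormedSpace ℝ E] [MeasurableSpace E] [BorelSpace E]
  [FiniteDimensional ℝ E] {μ : Measure E} [μ.IsAddHaarMeasure]

theorem integral_one_add_norm_rpow_neg_pos {r : ℝ} (hr : (finrank ℝ E : ℝ) < r) :
    0 < ∫ x, (1 + ‖x‖) ^ (-r) ∂μ :=
  integral_pos_of_integrable_nonneg_nonzero (x := 0)
    ((continuous_const.add continuous_norm).rpow_const fun x : E =>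
      Or.inl (by positivity : (1 + ‖x‖ : ℝ) ≠ 0))
    (integrable_one_add_norm hr) (fun x => Real.rpow_nonneg (by positivity) _) (by positivity)

theorem lintegral_rpow_dilation_convolution_le {q s c M : ℝ} (hq0 : 0 < q) (hq1 : q < 1)
    (hr : (finrank ℝ E : ℝ) < s * (q / (1 - q))) (hc : 0 < c) (hcM : c ≤ M) (hM : 1 ≤ M)
    {f k : E → ℝ} (hf : Measurable f) (hk : Measurable k) (hf0 : ∀ x, 0 ≤ f x)
    (hk0 : ∀ x, 0 ≤ k x) (hfi : Integrable (fun x => (1 + ‖x‖) ^ s * f x) μ)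
    (hki : Integrable (fun x => (1 + ‖x‖) ^ s * k x) μ) :
    ∫⁻ y, ENNReal.ofReal
        ((∫ x, (c ^ finrank ℝ E)⁻¹ * k (c⁻¹ • (y - x)) * f x ∂μ) ^ q) ∂μ ≤
      ENNReal.ofReal (M ^ (s * q) * (∫ x, (1 + ‖x‖) ^ (-(s * (q / (1 - q)))) ∂μ) ^ (1 - q) *
        ((∫ x, (1 + ‖x‖) ^ s * f x ∂μ) * (∫ x, (1 + ‖x‖) ^ s * k x ∂μ)) ^ q) := by
  set r := s * (q / (1 - q))
  have hs : 0 ≤ s := by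
    have : 0 < q / (1 - q) := div_pos hq0 (by linarith)
    nlinarith [(finrank ℝ E).cast_nonneg (α := ℝ)]
  have hcn : 0 ≤ (c ^ finrank ℝ E)⁻¹ := by positivity
  set F : E → ℝ≥0∞ := fun x => ENNReal.ofReal (f x)
  set K : E → ℝ≥0∞ := fun t => ENNReal.ofReal ((c ^ finrank ℝ E)⁻¹ * k (c⁻¹ • t))
  have hIf : 0 ≤ ∫ x, (1 + ‖x‖) ^ s * f x ∂μ :=
    integral_nonneg fun x => mul_nonneg (by positivity) (hf0 x)
  have hIk : 0 ≤ ∫ x, (1 + ‖x‖) ^ s * k x ∂μ :=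
    integral_nonneg fun x => mul_nonneg (by positivity) (hk0 x)
  have hIr := integral_one_add_norm_rpow_neg_pos (μ := μ) hr
  calc _ ≤ ∫⁻ y, (F ⋆ₗ[μ] K) y ^ q ∂μ :=
        lintegral_mono fun y => ofReal_integral_rpow_le_lconvolution_rpow hf0
          (fun t => mul_nonneg hcn (hk0 _)) hq0.le y
    _ ≤ ((∫⁻ x, F x * polyWeight s x ∂μ) * ∫⁻ x, K x * polyWeight s x ∂μ) ^ q *
          (∫⁻ x, polyWeight (-r) x ∂μ) ^ (1 - q) :=
        lintegral_lconvolution_rpow_le hq0 hq1 hs hf.ennreal_ofReal.aemeasurable (by fun_prop)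
    _ ≤ ((∫⁻ x, F x * polyWeight s x ∂μ) *
          (ENNReal.ofReal (M ^ s) * ∫⁻ x, ENNReal.ofReal (k x) * polyWeight s x ∂μ)) ^ q *
          ENNReal.ofReal (∫ x, (1 + ‖x‖) ^ (-r) ∂μ) ^ (1 - q) := by
        rw [ofReal_integral_eq_lintegral_ofReal (integrable_one_add_norm hr)
          (ae_of_all _ fun x => by positivity)]
        gcongr
        · simp_rw [K, ENNReal.ofReal_mul hcn]
          exact lintegral_dilation_mul_polyWeight_le μ hs hc hcM hM
        · rfl
    _ = _ := by
        rw [← ofReal_integral_one_add_norm_rpow_mul hf0 hfi,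
          ← ofReal_integral_one_add_norm_rpow_mul hk0 hki, ← ENNReal.ofReal_mul (by positivity),
          ← ENNReal.ofReal_mul hIf, ENNReal.ofReal_rpow_of_nonneg (by positivity) hq0.le,
          ENNReal.ofReal_rpow_of_nonneg hIr.le (by linarith), ← ENNReal.ofReal_mul (by positivity),
          Real.mul_rpow hIf (by positivity), Real.mul_rpow (by positivity) hIk,
          Real.mul_rpow hIf hIk, Real.rpow_mul (by linarith)]
        ring_nf

end Haar

theorem stmt5_general (d : ℕ) (hd : 1 ≤ d) (p s b : ℝ)
    (hp1 : 1 ≤ p) (hp2 : p < 2) (hs : (d : ℝ) * (2 - p) / p < s) :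
    ∃ C : ℝ, 0 < C ∧
      ∀ f k : EuclideanSpace ℝ (Fin d) → ℝ,
        Measurable f → Measurable k → (∀ x, 0 ≤ f x) → (∀ x, 0 ≤ k x) →
        Integrable (fun y : EuclideanSpace ℝ (Fin d) => (1 + ‖y‖) ^ s * f y) →
        Integrable (fun y : EuclideanSpace ℝ (Fin d) => (1 + ‖y‖) ^ s * k y) →
        ∀ h : ℝ, 0 < h → h ≤ b →
          (∫⁻ y : EuclideanSpace ℝ (Fin d),
              ENNReal.ofReal
                ((∫ x, (h⁻¹ * k ((h ^ ((1 : ℝ) / d))⁻¹ • (y - x))) * f x) ^ (p / 2))) ≤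
            ENNReal.ofReal (C *
              ((∫ y : EuclideanSpace ℝ (Fin d), (1 + ‖y‖) ^ s * f y) *
                (∫ y : EuclideanSpace ℝ (Fin d), (1 + ‖y‖) ^ s * k y)) ^ (p / 2)) := by
  have hr : (finrank ℝ (EuclideanSpace ℝ (Fin d)) : ℝ) < s * (p / 2 / (1 - p / 2)) := by
    rw [finrank_euclideanSpace_fin]
    exact lt_mul_div_one_sub_half_of_div_lt (by linarith) hp2 hs
  have hM : 1 ≤ max 1 b ^ ((1 : ℝ) / d) := Real.one_le_rpow (le_max_left _ _) (by positivity)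
  have hIr := integral_one_add_norm_rpow_neg_pos (μ := volume) hr
  refine ⟨(max 1 b ^ ((1 : ℝ) / d)) ^ (s * (p / 2)) *
    (∫ x : EuclideanSpace ℝ (Fin d), (1 + ‖x‖) ^ (-(s * (p / 2 / (1 - p / 2))))) ^ (1 - p / 2),
    by positivity, ?_⟩
  intro f k hf hk hf0 hk0 hfi hki h hh hhb
  have hcd : (h ^ ((1 : ℝ) / d)) ^ finrank ℝ (EuclideanSpace ℝ (Fin d)) = h := by
    rw [finrank_euclideanSpace_fin, ← Real.rpow_natCast, ← Real.rpow_mul hh.le,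
      one_div_mul_cancel (by positivity), Real.rpow_one]
  have hcM : h ^ ((1 : ℝ) / d) ≤ max 1 b ^ ((1 : ℝ) / d) :=
    Real.rpow_le_rpow hh.le (hhb.trans (le_max_right _ _)) (by positivity)
  simpa only [hcd] using lintegral_rpow_dilation_convolution_le (by positivity) (by linarith) hr
    (by positivity) hcM hM hf hk hf0 hk0 hfi hki

/-- Let `1 ≤ p < 2`, `s > d(2−p)/p` and `0 < b < ∞`. There is a constant `C`,
depending only on `d, p, s, b`, such that for all nonnegative measurable `f, k : ℝ^d → [0,∞)`
in `L_1(μ_s)` (where `dμ_s(t) = (1+|t|)^s dt`) and all `h ∈ (0, b]`,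
`∫ (k_h * f)^{p/2} ≤ C (‖f‖_{L_1(μ_s)} ‖k‖_{L_1(μ_s)})^{p/2}`, where
`k_h(t) = h^{−1} k(t/h^{1/d})`. -/
theorem stmt5 (d : ℕ) (hd : 1 ≤ d) (p s b : ℝ)
    (hp1 : 1 ≤ p) (hp2 : p < 2) (hs : (d : ℝ) * (2 - p) / p < s) (hb : 0 < b) :
    ∃ C : ℝ, 0 < C ∧
      ∀ f k : EuclideanSpace ℝ (Fin d) → ℝ,
        Measurable f → Measurable k → (∀ x, 0 ≤ f x) → (∀ x, 0 ≤ k x) →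
        Integrable (fun y : EuclideanSpace ℝ (Fin d) => (1 + ‖y‖) ^ s * f y) →
        Integrable (fun y : EuclideanSpace ℝ (Fin d) => (1 + ‖y‖) ^ s * k y) →
        ∀ h : ℝ, 0 < h → h ≤ b →
          (∫⁻ y : EuclideanSpace ℝ (Fin d),
              ENNReal.ofReal
                ((∫ x, (h⁻¹ * k ((h ^ ((1 : ℝ) / d))⁻¹ • (y - x))) * f x) ^ (p / 2))) ≤
            ENNReal.ofReal (C *
              ((∫ y : EuclideanSpace ℝ (Fin d), (1 + ‖y‖) ^ s * f y) *
                (∫ y : EuclideanSpace ℝ (Fin d), (1 + ‖y‖) ^ s * k y)) ^ (p / 2)) :=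
  stmt5_general d hd p s b hp1 hp2 hs
end

section
/- Let (S, 𝒮) be a measurable space, P a probability measure on S, and g : S^m → ℝ^d measurable. Let 1 ≤ p < ∞, let L ∈ L_p(ℝ^d) and h > 0. Then there is a constant c < ∞ depending only on m such that for every 1 ≤ k ≤ m and all x_1, …, x_k ∈ S, ‖ π_k L̄_h(·, x_1, …, x_k) ‖_{L_p(ℝ^d)} ≤ c ‖L‖_{L_p(ℝ^d)} / h^{(p−1)/p}. -/
/-!
Each of the `2^k` terms of `π_k` is an expectation of `L̄_h`, itself an average of `m!`
translates of `L_h`; so `|π_k L̄_h(t, x)|` is at most `2^k` times an average of `2^k m!`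
expectations `E |L_h(t - a_i(Y))|`. Convexity of `u ↦ u^p` (power mean over the indices, Jensen
for the expectations) and Tonelli bound `‖π_k L̄_h(·, x)‖_p^p` by `2^{kp} sup_a ‖L_h(· - a)‖_p^p`,
and the substitution `t ↦ h^{1/d} t` gives `‖L_h‖_p^p = h^{1-p} ‖L‖_p^p`. Hence `c = 2^m`.
-/

open MeasureTheory Finset
noncomputable section

/-- The `k`-th Hoeffding projection `π_k L` of an `m`-variable kernel `L` with respect to `P`:
`π_k L(x_1,…,x_k) = Σ_{A ⊆ {1,…,k}} (−1)^{k−|A|} E L(Y_1,…,Y_m)` where `Y_j = x_j` for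
`j ∈ A` and `Y_j` is an independent `P`-distributed variable otherwise. -/
def hproj {S : Type*} [MeasurableSpace S] (P : Measure S) (m k : ℕ)
    (L : (Fin m → S) → ℝ) (x : Fin k → S) : ℝ :=
  ∑ A : Finset (Fin k), (-1 : ℝ) ^ (k - A.card) *
    ∫ y : Fin m → S,
      L (fun j => if h : (j : ℕ) < k then
          (if (⟨(j : ℕ), h⟩ : Fin k) ∈ A then x ⟨(j : ℕ), h⟩ else y j) else y j)
      ∂(Measure.pi fun _ => P)

/-- The symmetrized dilated kernel
`L̄_h(t, x_1,…,x_m) = (1/m!) Σ_σ L_h(t − g(x_{σ(1)},…,x_{σ(m)}))`, where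
`L_h(t) = h^{−1} L(t/h^{1/d})`. -/
def Kbar {S : Type*} (d m : ℕ) (g : (Fin m → S) → EuclideanSpace ℝ (Fin d))
    (L : EuclideanSpace ℝ (Fin d) → ℝ) (h : ℝ) (t : EuclideanSpace ℝ (Fin d))
    (x : Fin m → S) : ℝ :=
  ((m.factorial : ℝ))⁻¹ * ∑ σ : Equiv.Perm (Fin m),
    h⁻¹ * L ((h ^ ((1 : ℝ) / d))⁻¹ • (t - g (x ∘ σ)))

open scoped ENNReal

theorem rpow_lintegral_le_lintegral_rpow {α : Type*} [MeasurableSpace α] {μ : Measure α}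
    [IsProbabilityMeasure μ] {p : ℝ} (hp : 1 ≤ p) {v : α → ℝ≥0∞} (hv : AEMeasurable v μ) :
    (∫⁻ a, v a ∂μ) ^ p ≤ ∫⁻ a, v a ^ p ∂μ := by
  have h := eLpNorm'_le_eLpNorm'_of_exponent_le one_pos hp μ hv.aestronglyMeasurable
  simp only [eLpNorm', enorm_eq_self, ENNReal.rpow_one, div_one, one_div] at h
  exact (ENNReal.le_rpow_inv_iff (by linarith)).1 h

theorem lintegral_rpow_le_of_le_mul_sum_lintegral {T Y ι : Type*} [MeasurableSpace T]
    [MeasurableSpace Y] [Fintype ι] {μ : Measure T} [SFinite μ] {ν : Measure Y}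
    [IsProbabilityMeasure ν] {p : ℝ} (hp : 1 ≤ p) {f : ι → T → Y → ℝ≥0∞}
    (hf : ∀ i, Measurable (Function.uncurry (f i))) {F : T → ℝ≥0∞} {c B : ℝ≥0∞}
    (hF : ∀ t, F t ≤ c * ∑ i, ∫⁻ y, f i t y ∂ν) (hB : ∀ i y, ∫⁻ t, f i t y ^ p ∂μ ≤ B) :
    ∫⁻ t, F t ^ p ∂μ ≤ (c * Fintype.card ι) ^ p * B := by
  have hp0 : 0 ≤ p := by linarith
  set n : ℝ≥0∞ := (Fintype.card ι : ℝ≥0∞)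
  have hpointwise : ∀ t, F t ^ p ≤ c ^ p * n ^ (p - 1) * ∑ i, ∫⁻ y, f i t y ^ p ∂ν := fun t =>
    calc F t ^ p ≤ c ^ p * (∑ i, ∫⁻ y, f i t y ∂ν) ^ p := by
          rw [← ENNReal.mul_rpow_of_nonneg _ _ hp0]; gcongr; exact hF t
      _ ≤ c ^ p * (n ^ (p - 1) * ∑ i, (∫⁻ y, f i t y ∂ν) ^ p) := by
          gcongr; exact ENNReal.rpow_sum_le_const_mul_sum_rpow _ _ hp
      _ ≤ c ^ p * n ^ (p - 1) * ∑ i, ∫⁻ y, f i t y ^ p ∂ν := by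
          rw [mul_assoc]; gcongr with i
          exact rpow_lintegral_le_lintegral_rpow hp
            ((hf i).comp measurable_prodMk_left).aemeasurable
  have hswap : ∀ i, ∫⁻ t, ∫⁻ y, f i t y ^ p ∂ν ∂μ ≤ B := fun i =>
    calc ∫⁻ t, ∫⁻ y, f i t y ^ p ∂ν ∂μ = ∫⁻ y, ∫⁻ t, f i t y ^ p ∂μ ∂ν :=
          lintegral_lintegral_swap ((hf i).pow_const p).aemeasurable
      _ ≤ ∫⁻ _, B ∂ν := lintegral_mono (hB i)
      _ = B := by simp
  calc ∫⁻ t, F t ^ p ∂μ ≤ ∫⁻ t, c ^ p * n ^ (p - 1) * ∑ i, ∫⁻ y, f i t y ^ p ∂ν ∂μ :=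
        lintegral_mono hpointwise
    _ = c ^ p * n ^ (p - 1) * ∑ i, ∫⁻ t, ∫⁻ y, f i t y ^ p ∂ν ∂μ := by
        rw [lintegral_const_mul _ (by fun_prop), lintegral_finsetSum _ fun i _ => by fun_prop]
    _ ≤ c ^ p * n ^ (p - 1) * (n * B) := by
        gcongr; simpa [n] using Finset.sum_le_sum fun i (_ : i ∈ Finset.univ) => hswap i
    _ = (c * n) ^ p * B := by
        have hn : n ^ p = n ^ (p - 1) * n := by
          conv_lhs => rw [← sub_add_cancel p 1]
          rw [ENNReal.rpow_add_of_nonneg _ _ (by linarith) zero_le_one, ENNReal.rpow_one]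
        rw [ENNReal.mul_rpow_of_nonneg _ _ hp0, hn]
        ring

theorem lintegral_comp_inv_smul {E : Type*} [NormedAddCommGroup E] [NormedSpace ℝ E]
    [MeasurableSpace E] [BorelSpace E] [FiniteDimensional ℝ E] (μ : Measure E)
    [μ.IsAddHaarMeasure] {G : E → ℝ≥0∞} (hG : Measurable G) {r : ℝ} (hr : r ≠ 0) :
    ∫⁻ x, G (r⁻¹ • x) ∂μ = ENNReal.ofReal |r ^ Module.finrank ℝ E| * ∫⁻ x, G x ∂μ := by
  rw [← lintegral_map hG (measurable_const_smul r⁻¹), Measure.map_addHaar_smul μ (inv_ne_zero hr),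
    lintegral_smul_measure, inv_pow, inv_inv, smul_eq_mul]

/-- The paper's `L_h`: `Kbar` is the average of the translates `L_h(t - g(x ∘ σ))`. -/
def dilate (d : ℕ) (L : EuclideanSpace ℝ (Fin d) → ℝ) (h : ℝ) (t : EuclideanSpace ℝ (Fin d)) :
    ℝ :=
  h⁻¹ * L ((h ^ ((1 : ℝ) / d))⁻¹ • t)

section DilatedKernel

variable {d : ℕ} {L : EuclideanSpace ℝ (Fin d) → ℝ} {h : ℝ}

theorem measurable_dilate (hL : Measurable L) : Measurable (dilate d L h) := by
  unfold dilate; fun_prop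

theorem lintegral_enorm_dilate_rpow (hd : d ≠ 0) (hL : Measurable L) (hh : 0 < h) (p : ℝ) :
    ∫⁻ t, ‖dilate d L h t‖ₑ ^ p = ENNReal.ofReal (h ^ (1 - p)) * ∫⁻ t, ‖L t‖ₑ ^ p := by
  have hs : 0 < h ^ ((1 : ℝ) / d) := Real.rpow_pos_of_pos hh _
  have hsd : (h ^ ((1 : ℝ) / d)) ^ d = h := by
    rw [← Real.rpow_natCast, ← Real.rpow_mul hh.le, one_div_mul_cancel (by exact_mod_cast hd),
      Real.rpow_one]
  simp_rw [dilate, enorm_mul, ENNReal.mul_rpow_of_ne_top enorm_ne_top enorm_ne_top]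
  rw [lintegral_const_mul' _ _ (by simp [hh.ne']),
    lintegral_comp_inv_smul volume (G := fun t => ‖L t‖ₑ ^ p) (by fun_prop) hs.ne',
    finrank_euclideanSpace_fin, hsd,
    ← mul_assoc, Real.enorm_eq_ofReal_abs, abs_of_pos (inv_pos.2 hh), abs_of_pos hh,
    ENNReal.ofReal_rpow_of_pos (inv_pos.2 hh), ← ENNReal.ofReal_mul (by positivity),
    Real.inv_rpow hh.le, Real.rpow_sub hh, Real.rpow_one, div_eq_inv_mul]

end DilatedKernel

section HoeffdingProjection

variable {S : Type*} [MeasurableSpace S] {m k : ℕ}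

/-- The argument `(Y_1, …, Y_m)` of the `A`-th term of `hproj`: `Y_j = x_j` for `j ∈ A`,
`Y_j = y_j` otherwise. -/
def mixArgs (x : Fin k → S) (A : Finset (Fin k)) (y : Fin m → S) : Fin m → S :=
  fun j => if h : (j : ℕ) < k then
    (if (⟨(j : ℕ), h⟩ : Fin k) ∈ A then x ⟨(j : ℕ), h⟩ else y j) else y j

theorem measurable_mixArgs (x : Fin k → S) (A : Finset (Fin k)) :
    Measurable (mixArgs (m := m) x A) := by
  refine measurable_pi_lambda _ fun j => ?_
  unfold mixArgs
  split_ifs <;> fun_prop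

theorem enorm_hproj_le (P : Measure S) (F : (Fin m → S) → ℝ) (x : Fin k → S) :
    ‖hproj P m k F x‖ₑ ≤
      ∑ A : Finset (Fin k), ∫⁻ y, ‖F (mixArgs x A y)‖ₑ ∂Measure.pi fun _ => P := by
  refine (enorm_sum_le _ _).trans (Finset.sum_le_sum fun A _ => ?_)
  rw [enorm_mul, enorm_pow, enorm_neg, enorm_one, one_pow, one_mul]
  exact enorm_integral_le_lintegral_enorm _

end HoeffdingProjection

theorem enorm_Kbar_le {S : Type*} {d m : ℕ} (g : (Fin m → S) → EuclideanSpace ℝ (Fin d))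
    (L : EuclideanSpace ℝ (Fin d) → ℝ) (h : ℝ) (t : EuclideanSpace ℝ (Fin d)) (x : Fin m → S) :
    ‖Kbar d m g L h t x‖ₑ ≤
      (m.factorial : ℝ≥0∞)⁻¹ * ∑ σ : Equiv.Perm (Fin m), ‖dilate d L h (t - g (x ∘ σ))‖ₑ := by
  rw [Kbar, enorm_mul, enorm_inv (by positivity), Real.enorm_natCast]
  gcongr
  exact enorm_sum_le _ _

theorem lintegral_enorm_hproj_Kbar_rpow_le {S : Type*} [MeasurableSpace S] (P : Measure S)
    [IsProbabilityMeasure P] {d m k : ℕ} (hd : d ≠ 0) {g : (Fin m → S) → EuclideanSpace ℝ (Fin d)}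
    (hg : Measurable g) {L : EuclideanSpace ℝ (Fin d) → ℝ} (hL : Measurable L) {h : ℝ}
    (hh : 0 < h) {p : ℝ} (hp : 1 ≤ p) (x : Fin k → S) :
    ∫⁻ t, ‖hproj P m k (Kbar d m g L h t) x‖ₑ ^ p ≤
      (2 ^ k) ^ p * (ENNReal.ofReal (h ^ (1 - p)) * ∫⁻ t, ‖L t‖ₑ ^ p) := by
  set ν := Measure.pi fun _ : Fin m => P
  let f : Finset (Fin k) × Equiv.Perm (Fin m) → EuclideanSpace ℝ (Fin d) → (Fin m → S) → ℝ≥0∞ :=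
    fun i t y => ‖dilate d L h (t - g (mixArgs x i.1 y ∘ i.2))‖ₑ
  have hf : ∀ i, Measurable (Function.uncurry (f i)) := fun i => by
    have hmix : Measurable fun y : Fin m → S => mixArgs x i.1 y ∘ i.2 :=
      measurable_pi_lambda _ fun j => (measurable_pi_apply (i.2 j)).comp (measurable_mixArgs x i.1)
    exact ((measurable_dilate hL).comp
      (measurable_fst.sub ((hg.comp hmix).comp measurable_snd))).enorm
  have hF : ∀ t, ‖hproj P m k (Kbar d m g L h t) x‖ₑ ≤
      (m.factorial : ℝ≥0∞)⁻¹ * ∑ i, ∫⁻ y, f i t y ∂ν := fun t =>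
    calc ‖hproj P m k (Kbar d m g L h t) x‖ₑ
        ≤ ∑ A, ∫⁻ y, ‖Kbar d m g L h t (mixArgs x A y)‖ₑ ∂ν := enorm_hproj_le P _ x
      _ ≤ ∑ A, ∫⁻ y, (m.factorial : ℝ≥0∞)⁻¹ * ∑ σ, f (A, σ) t y ∂ν := by
          gcongr; exact enorm_Kbar_le g L h t _
      _ = (m.factorial : ℝ≥0∞)⁻¹ * ∑ i, ∫⁻ y, f i t y ∂ν := by
          have hmeas : ∀ i, Measurable (f i t) := fun i => (hf i).of_uncurry_left
          rw [Fintype.sum_prod_type, Finset.mul_sum]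
          refine Finset.sum_congr rfl fun A _ => ?_
          rw [lintegral_const_mul _ (Finset.measurable_sum _ fun σ _ => hmeas (A, σ)),
            lintegral_finsetSum _ fun σ _ => hmeas (A, σ)]
  have hB : ∀ i y, ∫⁻ t, f i t y ^ p ≤ ENNReal.ofReal (h ^ (1 - p)) * ∫⁻ t, ‖L t‖ₑ ^ p :=
    fun i y => by
      rw [lintegral_sub_right_eq_self (fun t => ‖dilate d L h t‖ₑ ^ p),
        lintegral_enorm_dilate_rpow hd hL hh]
  have hcard : (m.factorial : ℝ≥0∞)⁻¹ * Fintype.card (Finset (Fin k) × Equiv.Perm (Fin m)) =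
      2 ^ k := by
    rw [Fintype.card_prod, Fintype.card_finset, Fintype.card_perm, Fintype.card_fin,
      Fintype.card_fin]
    push_cast
    rw [mul_comm, mul_assoc, ENNReal.mul_inv_cancel (by simp [Nat.factorial_ne_zero]) (by simp),
      mul_one]
  simpa only [hcard] using lintegral_rpow_le_of_le_mul_sum_lintegral hp hf hF hB

theorem ofReal_abs_rpow_eq_enorm_rpow (x : ℝ) {p : ℝ} (hp : 0 ≤ p) :
    ENNReal.ofReal (|x| ^ p) = ‖x‖ₑ ^ p := by
  rw [Real.enorm_eq_ofReal_abs, ENNReal.ofReal_rpow_of_nonneg (abs_nonneg x) hp]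

theorem integral_abs_rpow_le_of_lintegral_enorm_rpow_le {α : Type*} [MeasurableSpace α]
    {μ : Measure α} {F : α → ℝ} {p C : ℝ} (hp : 0 ≤ p) (hC : 0 ≤ C)
    (hF : ∫⁻ a, ‖F a‖ₑ ^ p ∂μ ≤ ENNReal.ofReal C) :
    ∫ a, |F a| ^ p ∂μ ≤ C := by
  refine (ENNReal.ofReal_le_ofReal_iff hC).1 (le_trans ?_ hF)
  calc ENNReal.ofReal (∫ a, |F a| ^ p ∂μ) ≤ ‖∫ a, |F a| ^ p ∂μ‖ₑ := by
        rw [Real.enorm_eq_ofReal_abs]; exact ENNReal.ofReal_le_ofReal (le_abs_self _)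
    _ ≤ ∫⁻ a, ‖|F a| ^ p‖ₑ ∂μ := enorm_integral_le_lintegral_enorm _
    _ = ∫⁻ a, ‖F a‖ₑ ^ p ∂μ := by
        simp_rw [Real.enorm_eq_ofReal_abs, abs_of_nonneg (Real.rpow_nonneg (abs_nonneg _) _),
          ofReal_abs_rpow_eq_enorm_rpow _ hp, Real.enorm_eq_ofReal_abs]

theorem stmt8_general (m : ℕ) :
    ∃ c : ℝ, 0 < c ∧
      ∀ (d : ℕ), 1 ≤ d →
      ∀ (S : Type) (_ : MeasurableSpace S) (P : Measure S), IsProbabilityMeasure P →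
      ∀ g : (Fin m → S) → EuclideanSpace ℝ (Fin d), Measurable g →
      ∀ p : ℝ, 1 ≤ p →
      ∀ L : EuclideanSpace ℝ (Fin d) → ℝ, Measurable L →
        Integrable (fun t : EuclideanSpace ℝ (Fin d) => |L t| ^ p) →
      ∀ h : ℝ, 0 < h →
      ∀ k : ℕ, 1 ≤ k → k ≤ m →
      ∀ x : Fin k → S,
        (∫ t : EuclideanSpace ℝ (Fin d), |hproj P m k (Kbar d m g L h t) x| ^ p) ^ (1 / p) ≤
          c * (∫ t : EuclideanSpace ℝ (Fin d), |L t| ^ p) ^ (1 / p) / h ^ ((p - 1) / p) := by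
  refine ⟨2 ^ m, by positivity, fun d hd S _ P _ g hg p hp L hL hLint h hh k _ hkm x => ?_⟩
  have hp0 : 0 < p := by linarith
  set I := ∫ t, |L t| ^ p
  have hI : ∫⁻ t, ‖L t‖ₑ ^ p = ENNReal.ofReal I := by
    rw [ofReal_integral_eq_lintegral_ofReal hLint (ae_of_all _ fun t => by positivity)]
    simp_rw [ofReal_abs_rpow_eq_enorm_rpow _ hp0.le]
  have hbound :
      ∫ t, |hproj P m k (Kbar d m g L h t) x| ^ p ≤ (2 ^ k) ^ p * (h ^ (1 - p) * I) := by
    refine integral_abs_rpow_le_of_lintegral_enorm_rpow_le hp0.le (by positivity) ?_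
    have := lintegral_enorm_hproj_Kbar_rpow_le P (by omega) hg hL hh hp x
    have h2 : ((2 : ℝ≥0∞) ^ k) ^ p = ENNReal.ofReal ((2 ^ k) ^ p) := by
      rw [← ENNReal.ofReal_rpow_of_nonneg (by positivity) hp0.le, ENNReal.ofReal_pow zero_le_two,
        ENNReal.ofReal_ofNat]
    rwa [hI, ← ENNReal.ofReal_mul (by positivity), h2, ← ENNReal.ofReal_mul (by positivity)] at this
  have hI0 : 0 ≤ I := integral_nonneg fun t => by positivity
  calc (∫ t, |hproj P m k (Kbar d m g L h t) x| ^ p) ^ (1 / p)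
      ≤ ((2 ^ k) ^ p * (h ^ (1 - p) * I)) ^ (1 / p) := by gcongr
    _ = 2 ^ k * I ^ (1 / p) / h ^ ((p - 1) / p) := by
        have hexp : h ^ ((1 - p) * (1 / p)) = (h ^ ((p - 1) / p))⁻¹ := by
          rw [← Real.rpow_neg hh.le]; ring_nf
        rw [Real.mul_rpow (by positivity) (by positivity), Real.mul_rpow (by positivity) hI0,
          ← Real.rpow_mul (by positivity), mul_one_div_cancel hp0.ne', Real.rpow_one,
          ← Real.rpow_mul hh.le, hexp, div_eq_mul_inv]
        ring
    _ ≤ 2 ^ m * I ^ (1 / p) / h ^ ((p - 1) / p) := by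
        gcongr
        norm_num

/-- There is a constant `c < ∞` depending only on `m` such that for every
measurable `g : S^m → ℝ^d`, every probability measure `P` on `S`, every `1 ≤ p < ∞`,
`L ∈ L_p(ℝ^d)`, `h > 0`, `1 ≤ k ≤ m` and `x_1, …, x_k ∈ S`,
`‖π_k L̄_h(·, x_1,…,x_k)‖_{L_p(ℝ^d)} ≤ c ‖L‖_{L_p(ℝ^d)} / h^{(p−1)/p}`. -/
theorem stmt8 (m : ℕ) (hm : 1 ≤ m) :
    ∃ c : ℝ, 0 < c ∧
      ∀ (d : ℕ), 1 ≤ d →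
      ∀ (S : Type) (_ : MeasurableSpace S) (P : Measure S), IsProbabilityMeasure P →
      ∀ g : (Fin m → S) → EuclideanSpace ℝ (Fin d), Measurable g →
      ∀ p : ℝ, 1 ≤ p →
      ∀ L : EuclideanSpace ℝ (Fin d) → ℝ, Measurable L →
        Integrable (fun t : EuclideanSpace ℝ (Fin d) => |L t| ^ p) →
      ∀ h : ℝ, 0 < h →
      ∀ k : ℕ, 1 ≤ k → k ≤ m →
      ∀ x : Fin k → S,
        (∫ t : EuclideanSpace ℝ (Fin d), |hproj P m k (Kbar d m g L h t) x| ^ p) ^ (1 / p) ≤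
          c * (∫ t : EuclideanSpace ℝ (Fin d), |L t| ^ p) ^ (1 / p) / h ^ ((p - 1) / p) :=
  stmt8_general m
end
end

section
/- Let k ≥ 1 be an integer and let 0 < c < C be real numbers such that log(C/c) ≥ k. Then ∫_0^c (log(C/x))^{k/2} dx ≤ 2 c (log(C/c))^{k/2}. -/
open MeasureTheory

/-- For an integer `k ≥ 1` and reals `0 < c < C` with `log (C / c) ≥ k`,
`∫_0^c (log (C/x))^{k/2} dx ≤ 2 c (log (C/c))^{k/2}`. -/
theorem stmt9 (k : ℕ) (hk : 1 ≤ k) (c C : ℝ) (hc : 0 < c) (hcC : c < C)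
    (hlog : (k : ℝ) ≤ Real.log (C / c)) :
    ∫ x in Set.Ioc (0 : ℝ) c, (Real.log (C / x)) ^ ((k : ℝ) / 2) ≤
      2 * c * (Real.log (C / c)) ^ ((k : ℝ) / 2) := by
  set L := Real.log (C / c) with hLdef
  have hk1 : (1:ℝ) ≤ (k:ℝ) := by exact_mod_cast hk
  have hL0 : 0 < L := lt_of_lt_of_le (by linarith) hlog
  set g : ℝ → ℝ := fun x => L ^ ((k:ℝ)/2) * c ^ ((1:ℝ)/2) * x ^ (-(1:ℝ)/2) with hg
  have hgint : IntegrableOn g (Set.Ioc 0 c) := by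
    apply Integrable.const_mul
    exact (intervalIntegrable_iff_integrableOn_Ioc_of_le hc.le).mp
      (intervalIntegral.intervalIntegrable_rpow' (by norm_num))
  have hbound : ∀ x ∈ Set.Ioc (0:ℝ) c, Real.log (C / x) ^ ((k:ℝ)/2) ≤ g x := by
    rintro x ⟨hx0, hxc⟩
    set s := Real.log (c / x) with hs
    have hcx1 : (1:ℝ) ≤ c / x := (one_le_div hx0).mpr hxc
    have hs0 : 0 ≤ s := Real.log_nonneg hcx1
    have hsplit : Real.log (C / x) = L + s := by
      have hC : (0:ℝ) < C := hc.trans hcC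
      rw [hLdef, hs, ← Real.log_mul (by positivity) (by positivity)]
      congr 1
      field_simp
    have hstep : L + s ≤ L * Real.exp (s / k) := by
      have h1 : s / L + 1 ≤ Real.exp (s / L) := Real.add_one_le_exp _
      have h2 : Real.exp (s / L) ≤ Real.exp (s / k) := by
        apply Real.exp_le_exp.mpr
        apply div_le_div_of_nonneg_left hs0 (by linarith) hlog
      calc L + s = L * (s / L + 1) := by field_simp; ring
        _ ≤ L * Real.exp (s / L) := by gcongr
        _ ≤ L * Real.exp (s / k) := by gcongr
    have hk0 : (k:ℝ) ≠ 0 := by positivity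
    calc Real.log (C / x) ^ ((k:ℝ)/2) = (L + s) ^ ((k:ℝ)/2) := by rw [hsplit]
      _ ≤ (L * Real.exp (s / k)) ^ ((k:ℝ)/2) := by
          apply Real.rpow_le_rpow (by linarith) hstep (by positivity)
      _ = L ^ ((k:ℝ)/2) * Real.exp (s / 2) := by
          rw [Real.mul_rpow hL0.le (Real.exp_pos _).le, ← Real.exp_mul]
          congr 1
          field_simp
      _ = g x := by
          have hexp : Real.exp s = c / x := Real.exp_log (by positivity)
          have h2 : Real.exp (s / 2) = (c / x) ^ ((1:ℝ)/2) := by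
            rw [← hexp, ← Real.exp_mul]
            congr 1; ring
          have hxneg : x ^ (-(1:ℝ)/2) = (x ^ ((1:ℝ)/2))⁻¹ := by
            rw [show (-(1:ℝ)/2) = -((1:ℝ)/2) by ring, Real.rpow_neg hx0.le]
          simp only [hg, h2, Real.div_rpow hc.le hx0.le, hxneg]
          field_simp
  have hmono : ∫ x in Set.Ioc (0:ℝ) c, Real.log (C / x) ^ ((k:ℝ)/2) ≤
      ∫ x in Set.Ioc (0:ℝ) c, g x := by
    apply integral_mono_of_nonneg
    · filter_upwards [ae_restrict_mem measurableSet_Ioc] with x hx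
      have h1 : (1:ℝ) ≤ C / x := le_of_lt ((one_lt_div hx.1).mpr (lt_of_le_of_lt hx.2 hcC))
      exact Real.rpow_nonneg (Real.log_nonneg h1) _
    · exact hgint
    · filter_upwards [ae_restrict_mem measurableSet_Ioc] with x hx
      exact hbound x hx
  have hgval : ∫ x in Set.Ioc (0:ℝ) c, g x = 2 * c * L ^ ((k:ℝ)/2) := by
    rw [hg]
    simp only
    rw [MeasureTheory.integral_const_mul]
    have : ∫ x in Set.Ioc (0:ℝ) c, x ^ (-(1:ℝ)/2) = 2 * c ^ ((1:ℝ)/2) := by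
      rw [← intervalIntegral.integral_of_le hc.le, integral_rpow (Or.inl (by norm_num))]
      rw [Real.zero_rpow (by norm_num)]
      ring_nf
    rw [this]
    rw [show L ^ ((k:ℝ)/2) * c ^ ((1:ℝ)/2) * (2 * c ^ ((1:ℝ)/2)) =
      2 * (c ^ ((1:ℝ)/2) * c ^ ((1:ℝ)/2)) * L ^ ((k:ℝ)/2) by ring,
      ← Real.rpow_add hc]
    norm_num
  linarith [hmono, hgval.le, hgval.ge]
end

section
/- Let d ≥ 1 and let Ψ : [0, ∞) → ℝ satisfy Ψ = M − N where M and N are bounded nondecreasing functions with M_0 := ∫_0^∞ r^{d−1} |M(r)| dr < ∞ and N_0 := ∫_0^∞ r^{d−1} |N(r)| dr < ∞. Then for all 1 ≤ λ ≤ μ, ∫_0^∞ r^{d−1} |Ψ(r λ^{1/d}) − Ψ(r μ^{1/d})| dr ≤ (M_0 + N_0)(λ^{−1} − μ^{−1}). -/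
/-!
Both `M` and `N` are nondecreasing, so for `a = λ^{1/d} ≤ b = μ^{1/d}` the increment
`|Ψ(ra) - Ψ(rb)|` is at most `(M(rb) - M(ra)) + (N(rb) - N(ra))`, a sum of nonnegative terms. The
substitution `s = rc` turns `∫ r^{d-1} F(rc) dr` into `c^{-d} ∫ s^{d-1} F(s) ds`, so each increment
integrates to exactly `(μ⁻¹ - λ⁻¹) ∫ r^{d-1} F(r) dr` with `F = M, N`, which is at most
`(λ⁻¹ - μ⁻¹) ∫ r^{d-1} |F(r)| dr`.
-/

open MeasureTheory Set

section Scaling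

variable {k : ℕ} {F : ℝ → ℝ} {c : ℝ}

lemma pow_mul_comp_mul_eq (hc : c ≠ 0) (r : ℝ) :
    r ^ k * F (r * c) = (c ^ k)⁻¹ * ((r * c) ^ k * F (r * c)) := by
  field_simp
  ring

lemma integrableOn_Ioi_pow_mul_comp_mul_right (hF : IntegrableOn (fun r => r ^ k * F r) (Ioi 0))
    (hc : 0 < c) : IntegrableOn (fun r => r ^ k * F (r * c)) (Ioi 0) := by
  have hscaled : IntegrableOn (fun r => (r * c) ^ k * F (r * c)) (Ioi 0) :=
    (integrableOn_Ioi_comp_mul_right_iff (fun s => s ^ k * F s) 0 hc).2 (by simpa using hF)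
  have hconst : IntegrableOn (fun r => (c ^ k)⁻¹ * ((r * c) ^ k * F (r * c))) (Ioi 0) :=
    hscaled.const_mul _
  simpa only [← pow_mul_comp_mul_eq hc.ne'] using hconst

lemma integral_Ioi_pow_mul_comp_mul_right (F : ℝ → ℝ) (hc : 0 < c) :
    ∫ r in Ioi 0, r ^ k * F (r * c) = (c ^ (k + 1))⁻¹ * ∫ r in Ioi 0, r ^ k * F r := by
  simp_rw [pow_mul_comp_mul_eq hc.ne']
  rw [integral_const_mul, integral_comp_mul_right_Ioi (fun s => s ^ k * F s) 0 hc, zero_mul,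
    smul_eq_mul, ← mul_assoc, ← mul_inv, pow_succ]

end Scaling

section Monotone

variable {k : ℕ} {F : ℝ → ℝ}

lemma integrableOn_Ioi_pow_mul_of_monotoneOn (hF : MonotoneOn F (Ici 0))
    (hFint : IntegrableOn (fun r => r ^ k * |F r|) (Ioi 0)) :
    IntegrableOn (fun r => r ^ k * F r) (Ioi 0) := by
  have hmeas : AEMeasurable F (volume.restrict (Ioi 0)) :=
    aemeasurable_restrict_of_monotoneOn measurableSet_Ioi (hF.mono Ioi_subset_Ici_self)
  refine hFint.mono' ((measurable_id.pow_const k).aemeasurable.mul hmeas).aestronglyMeasurable ?_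
  filter_upwards [ae_restrict_mem measurableSet_Ioi] with r hr
  rw [Real.norm_eq_abs, abs_mul, abs_of_nonneg (pow_nonneg (le_of_lt hr) _)]

lemma integrableOn_Ioi_pow_mul_sub_comp_mul (hF : MonotoneOn F (Ici 0))
    (hFint : IntegrableOn (fun r => r ^ k * |F r|) (Ioi 0)) {a b : ℝ} (ha : 0 < a) (hb : 0 < b) :
    IntegrableOn (fun r => r ^ k * (F (r * b) - F (r * a))) (Ioi 0) := by
  have hint := integrableOn_Ioi_pow_mul_of_monotoneOn hF hFint
  simp_rw [mul_sub]
  exact (integrableOn_Ioi_pow_mul_comp_mul_right hint hb).sub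
    (integrableOn_Ioi_pow_mul_comp_mul_right hint ha)

lemma integral_Ioi_pow_mul_sub_comp_mul_le (hF : MonotoneOn F (Ici 0))
    (hFint : IntegrableOn (fun r => r ^ k * |F r|) (Ioi 0)) {a b : ℝ} (ha : 0 < a) (hab : a ≤ b) :
    ∫ r in Ioi 0, r ^ k * (F (r * b) - F (r * a)) ≤
      ((a ^ (k + 1))⁻¹ - (b ^ (k + 1))⁻¹) * ∫ r in Ioi 0, r ^ k * |F r| := by
  have hb : 0 < b := ha.trans_le hab
  have hint := integrableOn_Ioi_pow_mul_of_monotoneOn hF hFint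
  have hfactor : 0 ≤ (a ^ (k + 1))⁻¹ - (b ^ (k + 1))⁻¹ :=
    sub_nonneg.2 (inv_anti₀ (by positivity) (pow_le_pow_left₀ ha.le hab _))
  have habs : |∫ r in Ioi 0, r ^ k * F r| ≤ ∫ r in Ioi 0, r ^ k * |F r| := by
    refine (abs_integral_le_integral_abs).trans_eq (setIntegral_congr_fun measurableSet_Ioi ?_)
    intro r (hr : 0 < r)
    simp only [abs_mul, abs_of_nonneg (pow_nonneg hr.le k)]
  have hexact : ∫ r in Ioi 0, r ^ k * (F (r * b) - F (r * a)) =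
      ((a ^ (k + 1))⁻¹ - (b ^ (k + 1))⁻¹) * -∫ r in Ioi 0, r ^ k * F r := by
    simp_rw [mul_sub]
    rw [integral_sub (integrableOn_Ioi_pow_mul_comp_mul_right hint hb)
        (integrableOn_Ioi_pow_mul_comp_mul_right hint ha),
      integral_Ioi_pow_mul_comp_mul_right F hb, integral_Ioi_pow_mul_comp_mul_right F ha]
    ring
  rw [hexact]
  exact mul_le_mul_of_nonneg_left ((neg_le_abs _).trans habs) hfactor

end Monotone

lemma abs_sub_sub_sub_le_of_le {m₁ m₂ n₁ n₂ : ℝ} (hm : m₁ ≤ m₂) (hn : n₁ ≤ n₂) :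
    |(m₁ - n₁) - (m₂ - n₂)| ≤ (m₂ - m₁) + (n₂ - n₁) :=
  abs_le.2 ⟨by linarith, by linarith⟩

theorem stmt11_general (d : ℕ) (hd : 1 ≤ d) (M N : ℝ → ℝ)
    (hMmono : MonotoneOn M (Set.Ici 0)) (hNmono : MonotoneOn N (Set.Ici 0))
    (hMint : IntegrableOn (fun r : ℝ => r ^ (d - 1) * |M r|) (Set.Ioi 0))
    (hNint : IntegrableOn (fun r : ℝ => r ^ (d - 1) * |N r|) (Set.Ioi 0))
    (lam mu : ℝ) (hlam : 1 ≤ lam) (hlm : lam ≤ mu) :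
    ∫ r in Set.Ioi (0 : ℝ), r ^ (d - 1) *
        |(M (r * lam ^ ((1 : ℝ) / d)) - N (r * lam ^ ((1 : ℝ) / d))) -
          (M (r * mu ^ ((1 : ℝ) / d)) - N (r * mu ^ ((1 : ℝ) / d)))| ≤
      ((∫ r in Set.Ioi (0 : ℝ), r ^ (d - 1) * |M r|) +
        (∫ r in Set.Ioi (0 : ℝ), r ^ (d - 1) * |N r|)) * (lam⁻¹ - mu⁻¹) := by
  have hlam0 : 0 < lam := by linarith
  have hmu0 : 0 < mu := by linarith
  set a := lam ^ ((1 : ℝ) / d)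
  set b := mu ^ ((1 : ℝ) / d)
  have ha : 0 < a := by positivity
  have hab : a ≤ b := Real.rpow_le_rpow hlam0.le hlm (by positivity)
  have hpow : ∀ {x : ℝ}, 0 ≤ x → (x ^ ((1 : ℝ) / d)) ^ (d - 1 + 1) = x := fun hx => by
    rw [Nat.sub_add_cancel hd, one_div, Real.rpow_inv_natCast_pow hx (by omega)]
  have hMab := integrableOn_Ioi_pow_mul_sub_comp_mul hMmono hMint ha (ha.trans_le hab)
  have hNab := integrableOn_Ioi_pow_mul_sub_comp_mul hNmono hNint ha (ha.trans_le hab)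
  calc _ ≤ ∫ r in Ioi 0, (r ^ (d - 1) * (M (r * b) - M (r * a)) +
          r ^ (d - 1) * (N (r * b) - N (r * a))) := by
        refine integral_mono_of_nonneg ?_ (hMab.add hNab) ?_ <;>
          filter_upwards [ae_restrict_mem measurableSet_Ioi] with r (hr : 0 < r)
        · positivity
        have hra : r * a ∈ Ici 0 := (mul_pos hr ha).le
        have hrab : r * a ≤ r * b := mul_le_mul_of_nonneg_left hab hr.le
        have hrb : r * b ∈ Ici 0 := le_trans hra hrab
        rw [← mul_add]
        exact mul_le_mul_of_nonneg_left (abs_sub_sub_sub_le_of_le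
          (hMmono hra hrb hrab) (hNmono hra hrb hrab)) (by positivity)
    _ = (∫ r in Ioi 0, r ^ (d - 1) * (M (r * b) - M (r * a))) +
          ∫ r in Ioi 0, r ^ (d - 1) * (N (r * b) - N (r * a)) := integral_add hMab hNab
    _ ≤ _ := by
        grw [integral_Ioi_pow_mul_sub_comp_mul_le hMmono hMint ha hab,
          integral_Ioi_pow_mul_sub_comp_mul_le hNmono hNint ha hab, hpow hlam0.le, hpow hmu0.le]
        linarith

/-- Let `Ψ = M − N` on `[0, ∞)` with `M, N` bounded nondecreasing and
`M_0 := ∫_0^∞ r^{d−1}|M(r)| dr < ∞`, `N_0 := ∫_0^∞ r^{d−1}|N(r)| dr < ∞`. Then for all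
`1 ≤ λ ≤ μ`, `∫_0^∞ r^{d−1} |Ψ(r λ^{1/d}) − Ψ(r μ^{1/d})| dr ≤ (M_0 + N_0)(λ^{−1} − μ^{−1})`. -/
theorem stmt11 (d : ℕ) (hd : 1 ≤ d) (M N : ℝ → ℝ)
    (hMmono : MonotoneOn M (Set.Ici 0)) (hNmono : MonotoneOn N (Set.Ici 0))
    (hMbd : ∃ c : ℝ, ∀ r ∈ Set.Ici (0 : ℝ), |M r| ≤ c)
    (hNbd : ∃ c : ℝ, ∀ r ∈ Set.Ici (0 : ℝ), |N r| ≤ c)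
    (hMint : IntegrableOn (fun r : ℝ => r ^ (d - 1) * |M r|) (Set.Ioi 0))
    (hNint : IntegrableOn (fun r : ℝ => r ^ (d - 1) * |N r|) (Set.Ioi 0))
    (lam mu : ℝ) (hlam : 1 ≤ lam) (hlm : lam ≤ mu) :
    ∫ r in Set.Ioi (0 : ℝ), r ^ (d - 1) *
        |(M (r * lam ^ ((1 : ℝ) / d)) - N (r * lam ^ ((1 : ℝ) / d))) -
          (M (r * mu ^ ((1 : ℝ) / d)) - N (r * mu ^ ((1 : ℝ) / d)))| ≤
      ((∫ r in Set.Ioi (0 : ℝ), r ^ (d - 1) * |M r|) +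
        (∫ r in Set.Ioi (0 : ℝ), r ^ (d - 1) * |N r|)) * (lam⁻¹ - mu⁻¹) :=
  stmt11_general d hd M N hMmono hNmono hMint hNint lam mu hlam hlm
end

section
/- Let d ≥ 1 and let Ψ : [0, ∞) → ℝ satisfy Ψ = M − N where M and N are bounded nondecreasing functions with ∫_0^∞ r^{d−1} |M(r)| dr < ∞ and ∫_0^∞ r^{d−1} |N(r)| dr < ∞. Define K : ℝ^d → ℝ by K(x) = Ψ(|x|). Then there is a constant B_1 > 0 such that for every 0 < ε ≤ 1 there exist finitely many values λ_1, …, λ_N ∈ [1, ∞) with N ≤ B_1/ε such that for every λ ≥ 1 there is some j with ∫_{ℝ^d} |K(λ^{1/d} x) − K(λ_j^{1/d} x)| dx < ε; that is, the class {x ↦ K(λ^{1/d} x) : λ ≥ 1} has L_1(ℝ^d)-covering numbers N(ε) ≤ B_1 ε^{−1} for 0 < ε ≤ 1. -/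
/-!
For a radial `g = f(‖·‖)` with `f` nondecreasing, the dilates `g(a • ·)` increase with `a`, so
`|g(b • x) - g(a • x)|` involves no cancellation and the change of variables `x ↦ a • x`
computes its integral exactly: it is `|a⁻ᵈ - b⁻ᵈ| · |∫ g|`. Splitting `K = M(‖·‖) - N(‖·‖)`
and taking `a = λ^{1/d}` shows that `λ ↦ K(λ^{1/d} • ·)` is Lipschitz into `L₁` as a function
of `λ⁻¹ ∈ (0, 1]`, so a grid of mesh `≍ ε` in `λ⁻¹` gives the covering.
-/

open MeasureTheory Set Module

section Radial

variable {E : Type*} [NormedAddCommGroup E] [NormedSpace ℝ E] [MeasurableSpace E] [BorelSpace E]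
  [FiniteDimensional ℝ E] (μ : Measure E) [μ.IsAddHaarMeasure]

lemma integrable_comp_norm_of_monotoneOn [Nontrivial E] {f : ℝ → ℝ} (hf : MonotoneOn f (Ici 0))
    (hint : IntegrableOn (fun r : ℝ => r ^ (finrank ℝ E - 1) * |f r|) (Ioi 0)) :
    Integrable (fun x : E => f ‖x‖) μ := by
  rw [integrable_fun_norm_addHaar]
  have hmeas : AEMeasurable f (volume.restrict (Ioi (0 : ℝ))) :=
    aemeasurable_restrict_of_monotoneOn measurableSet_Ioi (hf.mono Ioi_subset_Ici_self)
  refine hint.congr' ((measurable_id.pow_const _).aemeasurable.smul hmeas).aestronglyMeasurable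
    (ae_of_all _ fun r => ?_)
  simp

lemma integral_abs_sub_comp_smul_of_le {g : E → ℝ} (hg : Integrable g μ) {a b : ℝ}
    (ha : 0 < a) (hb : 0 < b) (hab : ∀ x, g (a • x) ≤ g (b • x)) :
    ∫ x, |g (b • x) - g (a • x)| ∂μ =
      ((b ^ finrank ℝ E)⁻¹ - (a ^ finrank ℝ E)⁻¹) * ∫ x, g x ∂μ := by
  simp_rw [fun x => abs_of_nonneg (sub_nonneg.2 (hab x))]
  rw [integral_sub (hg.comp_smul hb.ne') (hg.comp_smul ha.ne'),
    Measure.integral_comp_smul_of_nonneg μ g b (hR := hb.le),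
    Measure.integral_comp_smul_of_nonneg μ g a (hR := ha.le), smul_eq_mul, smul_eq_mul, sub_mul]

lemma integral_abs_sub_comp_norm_smul_le_of_monotoneOn {f : ℝ → ℝ} (hf : MonotoneOn f (Ici 0))
    (hint : Integrable (fun x : E => f ‖x‖) μ) {a b : ℝ} (ha : 0 < a) (hb : 0 < b) :
    ∫ x, |f ‖a • x‖ - f ‖b • x‖| ∂μ ≤
      |(a ^ finrank ℝ E)⁻¹ - (b ^ finrank ℝ E)⁻¹| * |∫ x, f ‖x‖ ∂μ| := by
  wlog hab : a ≤ b generalizing a b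
  · simpa only [abs_sub_comm] using this hb ha (le_of_not_ge hab)
  have hmono : ∀ x : E, f ‖a • x‖ ≤ f ‖b • x‖ := fun x => by
    refine hf (norm_nonneg _) (norm_nonneg _) ?_
    rw [norm_smul, norm_smul, Real.norm_of_nonneg ha.le, Real.norm_of_nonneg hb.le]
    exact mul_le_mul_of_nonneg_right hab (norm_nonneg x)
  simp_rw [abs_sub_comm (f ‖a • _‖)]
  rw [integral_abs_sub_comp_smul_of_le μ hint ha hb hmono, abs_sub_comm, ← abs_mul]
  exact le_abs_self _

variable [Nontrivial E] {M N : ℝ → ℝ} (hMmono : MonotoneOn M (Ici 0))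
  (hNmono : MonotoneOn N (Ici 0))
  (hMint : IntegrableOn (fun r : ℝ => r ^ (finrank ℝ E - 1) * |M r|) (Ioi 0))
  (hNint : IntegrableOn (fun r : ℝ => r ^ (finrank ℝ E - 1) * |N r|) (Ioi 0))
  {K : E → ℝ} (hK : ∀ x, K x = M ‖x‖ - N ‖x‖)
include hMmono hNmono hMint hNint hK

lemma integral_abs_sub_comp_smul_le_of_sub_monotoneOn {a b : ℝ} (ha : 0 < a) (hb : 0 < b) :
    ∫ x, |K (a • x) - K (b • x)| ∂μ ≤ |(a ^ finrank ℝ E)⁻¹ - (b ^ finrank ℝ E)⁻¹| *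
      (|∫ x, M ‖x‖ ∂μ| + |∫ x, N ‖x‖ ∂μ|) := by
  have hM := integrable_comp_norm_of_monotoneOn μ hMmono hMint
  have hN := integrable_comp_norm_of_monotoneOn μ hNmono hNint
  have hdiff : ∀ {g : E → ℝ}, Integrable g μ → Integrable (fun x => |g (a • x) - g (b • x)|) μ :=
    fun hg => ((hg.comp_smul ha.ne').sub (hg.comp_smul hb.ne')).abs
  calc ∫ x, |K (a • x) - K (b • x)| ∂μ
      ≤ ∫ x, (|M ‖a • x‖ - M ‖b • x‖| + |N ‖a • x‖ - N ‖b • x‖|) ∂μ := by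
        refine integral_mono_of_nonneg (ae_of_all _ fun _ => abs_nonneg _)
          ((hdiff hM).add (hdiff hN)) (ae_of_all _ fun x => ?_)
        dsimp only
        rw [hK, hK, sub_sub_sub_comm]
        exact abs_sub _ _
    _ ≤ _ := by
        rw [integral_add (hdiff hM) (hdiff hN), mul_add]
        exact add_le_add (integral_abs_sub_comp_norm_smul_le_of_monotoneOn μ hMmono hM ha hb)
          (integral_abs_sub_comp_norm_smul_le_of_monotoneOn μ hNmono hN ha hb)

lemma integral_abs_sub_comp_rpow_smul_le_of_sub_monotoneOn {l l' : ℝ} (hl : 0 < l)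
    (hl' : 0 < l') :
    ∫ x, |K (l ^ ((1 : ℝ) / finrank ℝ E) • x) - K (l' ^ ((1 : ℝ) / finrank ℝ E) • x)| ∂μ ≤
      |l⁻¹ - l'⁻¹| * (|∫ x, M ‖x‖ ∂μ| + |∫ x, N ‖x‖ ∂μ|) := by
  have hpow : ∀ {t : ℝ}, 0 < t → (t ^ ((1 : ℝ) / finrank ℝ E)) ^ finrank ℝ E = t := fun ht => by
    rw [one_div, Real.rpow_inv_natCast_pow ht.le finrank_pos.ne']
  simpa only [hpow hl, hpow hl'] using integral_abs_sub_comp_smul_le_of_sub_monotoneOn μ hMmono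
    hNmono hMint hNint hK (Real.rpow_pos_of_pos hl ((1 : ℝ) / finrank ℝ E))
    (Real.rpow_pos_of_pos hl' ((1 : ℝ) / finrank ℝ E))

end Radial

lemma exists_finset_subset_Ioc_card_le_abs_sub_le {δ : ℝ} (hδ : 0 < δ) (hδ1 : δ ≤ 1) :
    ∃ S : Finset ℝ, (∀ s ∈ S, s ∈ Ioc 0 1) ∧ (S.card : ℝ) ≤ δ⁻¹ ∧
      ∀ u ∈ Ioc (0 : ℝ) 1, ∃ s ∈ S, |u - s| ≤ δ := by
  set n := ⌊δ⁻¹⌋₊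
  have hn : 1 ≤ n := Nat.le_floor (by simpa using (one_le_inv₀ hδ).2 hδ1)
  have hmem : ∀ j : ℕ, 1 ≤ j → j ≤ n → (j : ℝ) * δ ∈ Ioc 0 1 := fun j hj hjn => by
    refine ⟨mul_pos (by exact_mod_cast hj) hδ, ?_⟩
    calc (j : ℝ) * δ ≤ δ⁻¹ * δ := by
          gcongr
          exact (Nat.cast_le.2 hjn).trans (Nat.floor_le (inv_nonneg.2 hδ.le))
      _ = 1 := inv_mul_cancel₀ hδ.ne'
  refine ⟨(Finset.Icc 1 n).image (fun j : ℕ => (j : ℝ) * δ), ?_, ?_, fun u ⟨hu0, hu1⟩ => ?_⟩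
  · simp only [Finset.forall_mem_image, Finset.mem_Icc]
    exact fun j ⟨hj, hjn⟩ => hmem j hj hjn
  · calc ((Finset.Icc 1 n).image (fun j : ℕ => (j : ℝ) * δ)).card ≤ ((Finset.Icc 1 n).card : ℝ) :=
          Nat.cast_le.2 Finset.card_image_le
      _ = n := by simp
      _ ≤ δ⁻¹ := Nat.floor_le (inv_nonneg.2 hδ.le)
  -- `u` lies in `[jδ, (j + 1)δ)` for `j = ⌊u / δ⌋`, and in `(0, δ)` when that floor vanishes
  set k := ⌊u / δ⌋₊
  have hkn : k ≤ n :=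
    Nat.floor_le_floor (by simpa only [one_div] using div_le_div_of_nonneg_right hu1 hδ.le)
  have hku : (k : ℝ) * δ ≤ u := (le_div_iff₀ hδ).1 (Nat.floor_le (div_nonneg hu0.le hδ.le))
  have huk : u < (k + 1) * δ := (div_lt_iff₀ hδ).1 (Nat.lt_floor_add_one _)
  refine ⟨(max 1 k : ℕ) * δ, Finset.mem_image_of_mem _ (Finset.mem_Icc.2
    ⟨le_max_left _ _, max_le hn hkn⟩), abs_le.2 ?_⟩
  rcases Nat.eq_zero_or_pos k with hk | hk
  · simp only [hk, CharP.cast_eq_zero, zero_add, one_mul] at huk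
    simp only [hk, zero_le, max_eq_left, Nat.cast_one, one_mul]
    constructor <;> linarith
  · simp only [max_eq_right (show 1 ≤ k from hk)]
    constructor <;> linarith

lemma exists_finset_one_le_card_le_abs_inv_sub_le {δ : ℝ} (hδ : 0 < δ) (hδ1 : δ ≤ 1) :
    ∃ T : Finset ℝ, (∀ l ∈ T, 1 ≤ l) ∧ (T.card : ℝ) ≤ δ⁻¹ ∧
      ∀ l : ℝ, 1 ≤ l → ∃ l' ∈ T, |l⁻¹ - l'⁻¹| ≤ δ := by
  obtain ⟨S, hS, hcard, hcover⟩ := exists_finset_subset_Ioc_card_le_abs_sub_le hδ hδ1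
  refine ⟨S.image (·⁻¹), ?_, (Nat.cast_le.2 Finset.card_image_le).trans hcard, fun l hl => ?_⟩
  · simp only [Finset.forall_mem_image]
    exact fun s hs => one_le_inv₀ (hS s hs).1 |>.2 (hS s hs).2
  · obtain ⟨s, hs, hsu⟩ :=
      hcover l⁻¹ ⟨inv_pos.2 (zero_lt_one.trans_le hl), inv_le_one_of_one_le₀ hl⟩
    exact ⟨s⁻¹, Finset.mem_image_of_mem _ hs, by rwa [inv_inv]⟩

theorem stmt12_general (d : ℕ) (hd : 1 ≤ d) (M N : ℝ → ℝ)
    (hMmono : MonotoneOn M (Set.Ici 0)) (hNmono : MonotoneOn N (Set.Ici 0))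
    (hMint : IntegrableOn (fun r : ℝ => r ^ (d - 1) * |M r|) (Set.Ioi 0))
    (hNint : IntegrableOn (fun r : ℝ => r ^ (d - 1) * |N r|) (Set.Ioi 0))
    (K : EuclideanSpace ℝ (Fin d) → ℝ) (hK : ∀ x, K x = M ‖x‖ - N ‖x‖) :
    ∃ B1 : ℝ, 0 < B1 ∧ ∀ ε : ℝ, 0 < ε → ε ≤ 1 →
      ∃ T : Finset ℝ, (∀ l ∈ T, (1 : ℝ) ≤ l) ∧ (T.card : ℝ) ≤ B1 / ε ∧
        ∀ l : ℝ, 1 ≤ l → ∃ l' ∈ T,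
          ∫ x : EuclideanSpace ℝ (Fin d),
            |K (l ^ ((1 : ℝ) / d) • x) - K (l' ^ ((1 : ℝ) / d) • x)| < ε := by
  have hdim : finrank ℝ (EuclideanSpace ℝ (Fin d)) = d := finrank_euclideanSpace_fin
  have : Nontrivial (EuclideanSpace ℝ (Fin d)) :=
    Module.nontrivial_of_finrank_pos (R := ℝ) (by rwa [hdim])
  set C := |∫ x : EuclideanSpace ℝ (Fin d), M ‖x‖| + |∫ x : EuclideanSpace ℝ (Fin d), N ‖x‖|
  have hC : 0 ≤ C := by positivity
  have hlip : ∀ l l' : ℝ, 0 < l → 0 < l' → ∫ x : EuclideanSpace ℝ (Fin d),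
      |K (l ^ ((1 : ℝ) / d) • x) - K (l' ^ ((1 : ℝ) / d) • x)| ≤ |l⁻¹ - l'⁻¹| * C := by
    intro l l' hl hl'
    simpa only [hdim] using integral_abs_sub_comp_rpow_smul_le_of_sub_monotoneOn volume hMmono
      hNmono (by rwa [hdim]) (by rwa [hdim]) hK hl hl'
  refine ⟨C + 1, by positivity, fun ε hε hε1 => ?_⟩
  have hδ : 0 < ε / (C + 1) := by positivity
  obtain ⟨T, hT1, hTcard, hTcover⟩ := exists_finset_one_le_card_le_abs_inv_sub_le hδ
    ((div_le_one (by positivity)).2 (by linarith))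
  refine ⟨T, hT1, by rwa [inv_div] at hTcard, fun l hl => ?_⟩
  obtain ⟨l', hl'T, hll'⟩ := hTcover l hl
  refine ⟨l', hl'T, (hlip l l' (by linarith) (by linarith [hT1 l' hl'T])).trans_lt ?_⟩
  calc |l⁻¹ - l'⁻¹| * C ≤ ε / (C + 1) * C := mul_le_mul_of_nonneg_right hll' hC
    _ < ε / (C + 1) * (C + 1) := by gcongr; linarith
    _ = ε := div_mul_cancel₀ ε (by positivity)

/-- Let `Ψ = M − N` on `[0, ∞)` with `M, N` bounded nondecreasing satisfying
`∫_0^∞ r^{d−1}|M(r)| dr < ∞` and `∫_0^∞ r^{d−1}|N(r)| dr < ∞`, and let `K(x) = Ψ(|x|)` on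
`ℝ^d`. Then there is `B_1 > 0` such that for every `0 < ε ≤ 1` the class
`{x ↦ K(λ^{1/d} x) : λ ≥ 1}` can be covered by at most `B_1/ε` balls of `L_1(ℝ^d)`-radius `ε`
with centers `x ↦ K(λ_j^{1/d} x)`, `λ_j ≥ 1`. -/
theorem stmt12 (d : ℕ) (hd : 1 ≤ d) (M N : ℝ → ℝ)
    (hMmono : MonotoneOn M (Set.Ici 0)) (hNmono : MonotoneOn N (Set.Ici 0))
    (hMbd : ∃ c : ℝ, ∀ r ∈ Set.Ici (0 : ℝ), |M r| ≤ c)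
    (hNbd : ∃ c : ℝ, ∀ r ∈ Set.Ici (0 : ℝ), |N r| ≤ c)
    (hMint : IntegrableOn (fun r : ℝ => r ^ (d - 1) * |M r|) (Set.Ioi 0))
    (hNint : IntegrableOn (fun r : ℝ => r ^ (d - 1) * |N r|) (Set.Ioi 0))
    (K : EuclideanSpace ℝ (Fin d) → ℝ) (hK : ∀ x, K x = M ‖x‖ - N ‖x‖) :
    ∃ B1 : ℝ, 0 < B1 ∧ ∀ ε : ℝ, 0 < ε → ε ≤ 1 →
      ∃ T : Finset ℝ, (∀ l ∈ T, (1 : ℝ) ≤ l) ∧ (T.card : ℝ) ≤ B1 / ε ∧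
        ∀ l : ℝ, 1 ≤ l → ∃ l' ∈ T,
          ∫ x : EuclideanSpace ℝ (Fin d),
            |K (l ^ ((1 : ℝ) / d) • x) - K (l' ^ ((1 : ℝ) / d) • x)| < ε :=
  stmt12_general d hd M N hMmono hNmono hMint hNint K hK
end

section
/- Let f : ℝ → ℝ be right-continuous and of bounded variation on ℝ with total variation T_f, and suppose lim_{x → −∞} f(x) = 0. Then for every s ∈ ℝ, ∫_ℝ |f(x + s) − f(x)| dx ≤ T_f |s|. -/
open MeasureTheory Filter Set

/-!
The signed variation `v x` of `f` from `0` to `x` is monotone, dominates the increments of `f`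
(`|f y - f x| ≤ v y - v x` for `x ≤ y`) and oscillates by at most `T_f`. For such a `v` and
`s ≥ 0`, the integral of `v (x + s) - v x` over `[a, b]` telescopes to
`∫_b^{b+s} v - ∫_a^{a+s} v ≤ s T_f`; letting `[a, b]` exhaust `ℝ` gives the bound, and negative
`s` reduces to positive `s` by translation invariance of Lebesgue measure.
-/

theorem lintegral_le_of_forall_Ioc_le {f : ℝ → ENNReal} {C : ENNReal}
    (h : ∀ a b, a ≤ b → ∫⁻ x in Ioc a b, f x ≤ C) : ∫⁻ x, f x ≤ C := by
  have hunion : ⋃ n : ℕ, Ioc (-(n : ℝ)) n = univ :=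
    eq_univ_of_forall fun x =>
      let ⟨n, hn⟩ := exists_nat_gt |x|
      mem_iUnion.2 ⟨n, by linarith [neg_abs_le x], (le_abs_self x).trans hn.le⟩
  have hmono : Monotone fun n : ℕ => Ioc (-(n : ℝ)) n := fun m n hmn =>
    Ioc_subset_Ioc (by simpa using hmn) (by simpa using hmn)
  rw [← setLIntegral_univ, ← hunion, setLIntegral_iUnion_of_directed _ hmono.directed_le]
  exact iSup_le fun n => h _ _ (by linarith [n.cast_nonneg (α := ℝ)])

theorem Monotone.lintegral_sub_comp_add_le {v : ℝ → ℝ} (hv : Monotone v) {C : ℝ}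
    (hC : ∀ x y, v y - v x ≤ C) {s : ℝ} (hs : 0 ≤ s) :
    ∫⁻ x, ENNReal.ofReal (v (x + s) - v x) ≤ ENNReal.ofReal (C * s) := by
  refine lintegral_le_of_forall_Ioc_le fun a b hab => ?_
  have hint : ∀ c d, IntervalIntegrable v volume c d := fun _ _ => hv.intervalIntegrable
  have hshift : IntervalIntegrable (fun x => v (x + s)) volume a b :=
    (hv.comp (monotone_id.add_const s)).intervalIntegrable
  rw [← ofReal_integral_eq_lintegral_ofReal (hshift.sub (hint a b)).1
    (ae_of_all _ fun x => sub_nonneg.2 (hv (by linarith)))]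
  gcongr
  calc ∫ x in Ioc a b, (v (x + s) - v x)
      = (∫ x in b..b + s, v x) - ∫ x in a..a + s, v x := by
        rw [← intervalIntegral.integral_of_le hab, intervalIntegral.integral_sub hshift (hint a b),
          intervalIntegral.integral_comp_add_right v s,
          intervalIntegral.integral_interval_sub_interval_comm' (hint _ _) (hint _ _) (hint _ _)]
    _ ≤ (∫ _ in b..b + s, (v a + C)) - ∫ _ in a..a + s, v a := by
        gcongr
        · exact intervalIntegral.integral_mono_on (by linarith) (hint _ _)
            intervalIntegrable_const fun x _ => by linarith [hC a x]
        · exact intervalIntegral.integral_mono_on (by linarith) intervalIntegrable_const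
            (hint _ _) fun x hx => hv hx.1
    _ = C * s := by
        simp only [intervalIntegral.integral_const, add_sub_cancel_left, smul_eq_mul]
        ring

theorem lintegral_abs_sub_comp_add_le {f v : ℝ → ℝ} (hv : Monotone v) {C : ℝ}
    (hC : ∀ x y, v y - v x ≤ C) (hfv : ∀ x y, x ≤ y → |f y - f x| ≤ v y - v x) (s : ℝ) :
    ∫⁻ x, ENNReal.ofReal |f (x + s) - f x| ≤ ENNReal.ofReal (C * |s|) := by
  wlog hs : 0 ≤ s
  · have hshift : ∫⁻ x, ENNReal.ofReal |f (x + s) - f x| =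
        ∫⁻ x, ENNReal.ofReal |f (x + -s) - f x| := by
      rw [← lintegral_add_right_eq_self _ (-s)]
      simp only [neg_add_cancel_right, abs_sub_comm]
    simpa [hshift] using this hv hC hfv (-s) (by linarith)
  rw [abs_of_nonneg hs]
  calc ∫⁻ x, ENNReal.ofReal |f (x + s) - f x|
      ≤ ∫⁻ x, ENNReal.ofReal (v (x + s) - v x) :=
        lintegral_mono fun x => ENNReal.ofReal_le_ofReal (hfv _ _ (by linarith))
    _ ≤ ENNReal.ofReal (C * s) := hv.lintegral_sub_comp_add_le hC hs

theorem stmt13_general (f : ℝ → ℝ)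
    (hbv : BoundedVariationOn f Set.univ)
    (s : ℝ) :
    ∫⁻ x : ℝ, ENNReal.ofReal |f (x + s) - f x| ≤
      ENNReal.ofReal ((eVariationOn f Set.univ).toReal * |s|) := by
  have hloc := hbv.locallyBoundedVariationOn
  have hv : Monotone (variationOnFromTo f univ 0) :=
    monotoneOn_univ.1 (variationOnFromTo.monotoneOn hloc (mem_univ 0))
  refine lintegral_abs_sub_comp_add_le hv (fun x y => ?_) (fun x y hxy =>
    variationOnFromTo.abs_sub_le_sub_of_le hloc (mem_univ 0) (mem_univ x) (mem_univ y) hxy) s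
  rw [variationOnFromTo.sub_right hloc (mem_univ 0) (mem_univ y) (mem_univ x)]
  exact (le_abs_self _).trans (variationOnFromTo.abs_le_eVariationOn hbv)

/-- If `f : ℝ → ℝ` is right-continuous, of bounded variation on `ℝ` with total
variation `T_f`, and `f(x) → 0` as `x → −∞`, then for every `s ∈ ℝ`,
`∫_ℝ |f(x + s) − f(x)| dx ≤ T_f |s|`. -/
theorem stmt13 (f : ℝ → ℝ)
    (hbv : BoundedVariationOn f Set.univ)
    (hrc : ∀ x : ℝ, ContinuousWithinAt f (Set.Ici x) x)
    (hlim : Tendsto f atBot (nhds 0)) (s : ℝ) :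
    ∫⁻ x : ℝ, ENNReal.ofReal |f (x + s) - f x| ≤
      ENNReal.ofReal ((eVariationOn f Set.univ).toReal * |s|) :=
  stmt13_general f hbv s
end

section
/- Let g : ℝ → ℝ be bounded, right-continuous, of bounded variation with total variation T_g, and with lim_{x → −∞} g(x) = 0, and let f : ℝ → [0, ∞) be a bounded probability density. Then for all s, t ∈ ℝ, ∫_ℝ (g(t − u) − g(s − u))² f(u) du ≤ 2 ‖g‖_∞ ‖f‖_∞ T_g |t − s|, where ‖·‖_∞ denotes the supremum norm. In particular, if ρ²(s, t) := ∫_ℝ (g(t − u) − g(s − u))² f(u) du, the identity map from (ℝ, |·|) to (ℝ, ρ) is uniformly continuous. -/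
/-!
Covering ℝ by the translates `k h + (0, h]`, `k ∈ ℤ`, the integral of `|g (x + h) - g x|` becomes
an integral over `(0, h]` of the sums `∑ₖ |g (x + (k + 1) h) - g (x + k h)|`, each of which is a
partition sum for the variation of `g`; hence `∫ |g (x + h) - g x| dx ≤ T_g |h|`. Bounding
`(g (t - u) - g (s - u))² f u` by `2 ‖g‖_∞ ‖f‖_∞ |g (t - u) - g (s - u)|` and substituting
`x = s - u` gives the estimate, and uniform continuity follows since `ρ(s, t) ≤ C |t - s|^{1/2}`.
-/

open MeasureTheory Filter

theorem MeasureTheory.tsum_lintegral_le_lintegral_tsum {α ι : Type*} [MeasurableSpace α]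
    {μ : Measure α} (f : ι → α → ENNReal) :
    ∑' i, ∫⁻ a, f i a ∂μ ≤ ∫⁻ a, ∑' i, f i a ∂μ := by
  classical
  rw [ENNReal.tsum_eq_iSup_sum]
  refine iSup_le fun F => ?_
  calc ∑ i ∈ F, ∫⁻ a, f i a ∂μ ≤ ∫⁻ a, ∑ i ∈ F, f i a ∂μ := by
        induction F using Finset.induction_on with
        | empty => simp
        | insert i F hi ih =>
          simp only [Finset.sum_insert hi]
          exact (add_le_add le_rfl ih).trans (le_lintegral_add _ _)
    _ ≤ ∫⁻ a, ∑' i, f i a ∂μ := lintegral_mono fun a => ENNReal.sum_le_tsum F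

theorem eVariationOn.tsum_int_le {α E : Type*} [LinearOrder α] [PseudoEMetricSpace E]
    (f : α → E) {s : Set α} {u : ℤ → α} (hu : Monotone u) (hus : ∀ k, u k ∈ s) :
    ∑' k, edist (f (u (k + 1))) (f (u k)) ≤ eVariationOn f s := by
  rw [ENNReal.tsum_eq_iSup_sum]
  refine iSup_le fun F => ?_
  set N := F.sup Int.natAbs
  let shift : ℕ → ℤ := fun i => i - N
  have hF : F ⊆ (Finset.range (2 * N + 1)).image shift := fun k hk => by
    have : k.natAbs ≤ N := Finset.le_sup hk
    exact Finset.mem_image.2 ⟨(k + N).toNat, Finset.mem_range.2 (by omega), by simp only [shift]; omega⟩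
  have hshift : Set.InjOn shift (Finset.range (2 * N + 1)) := fun i _ j _ h => by
    simp only [shift] at h; omega
  calc ∑ k ∈ F, edist (f (u (k + 1))) (f (u k))
      ≤ ∑ k ∈ (Finset.range (2 * N + 1)).image shift, edist (f (u (k + 1))) (f (u k)) :=
        Finset.sum_le_sum_of_subset hF
    _ = ∑ i ∈ Finset.range (2 * N + 1), edist (f ((u ∘ shift) (i + 1))) (f ((u ∘ shift) i)) := by
        rw [Finset.sum_image hshift]
        refine Finset.sum_congr rfl fun i _ => ?_
        simp only [Function.comp, shift]
        push_cast; ring_nf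
    _ ≤ eVariationOn f s :=
        eVariationOn.sum_le (hu.comp fun i j hij => by simp only [shift]; omega) fun i => hus _

theorem eVariationOn.lintegral_edist_add_le_of_pos {E : Type*} [PseudoEMetricSpace E]
    (f : ℝ → E) {h : ℝ} (hh : 0 < h) :
    ∫⁻ x, edist (f (x + h)) (f x) ≤ eVariationOn f Set.univ * ENNReal.ofReal h := by
  have hdom := isAddFundamentalDomain_Ioc hh 0
  rw [hdom.lintegral_eq_tsum'']
  refine (tsum_lintegral_le_lintegral_tsum _).trans ?_
  calc _ ≤ ∫⁻ _ in Set.Ioc 0 (0 + h), eVariationOn f Set.univ := by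
        refine lintegral_mono fun x => ?_
        have hsurj : Function.Surjective fun k : ℤ => (⟨k • h, k, rfl⟩ : AddSubgroup.zmultiples h) :=
          fun ⟨_, k, hk⟩ => ⟨k, Subtype.ext hk⟩
        refine (ENNReal.tsum_le_tsum_comp_of_surjective hsurj _).trans <| le_of_eq_of_le
          (tsum_congr fun k => ?_) (eVariationOn.tsum_int_le f (u := fun k : ℤ => k • h + x)
            (fun i j hij => add_le_add_left (zsmul_left_mono hh.le hij) x) fun _ => Set.mem_univ _)
        show edist (f (k • h + x + h)) (f (k • h + x)) = _
        rw [add_zsmul, one_zsmul, add_right_comm]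
    _ = eVariationOn f Set.univ * ENNReal.ofReal h := by simp

theorem eVariationOn.lintegral_edist_add_le {E : Type*} [PseudoEMetricSpace E] (f : ℝ → E) (h : ℝ) :
    ∫⁻ x, edist (f (x + h)) (f x) ≤ eVariationOn f Set.univ * ENNReal.ofReal |h| := by
  rcases lt_trichotomy h 0 with hneg | rfl | hpos
  · calc ∫⁻ x, edist (f (x + h)) (f x) = ∫⁻ x, edist (f (x + -h)) (f x) := by
          rw [← lintegral_add_right_eq_self (fun x => edist (f (x + -h)) (f x)) h]
          simp [edist_comm]
      _ ≤ eVariationOn f Set.univ * ENNReal.ofReal |h| := by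
          rw [abs_of_neg hneg]; exact lintegral_edist_add_le_of_pos f (neg_pos.2 hneg)
  · simp
  · simpa [abs_of_pos hpos] using lintegral_edist_add_le_of_pos f hpos

theorem integral_sq_sub_comp_sub_mul_le {g w : ℝ → ℝ} (hg : BoundedVariationOn g Set.univ)
    {Mg Mw : ℝ} (hMg : ∀ x, |g x| ≤ Mg) (hMw : ∀ x, |w x| ≤ Mw) (s t : ℝ) :
    ∫ u, (g (t - u) - g (s - u)) ^ 2 * w u ≤
      2 * Mg * Mw * (eVariationOn g Set.univ).toReal * |t - s| := by
  have hMg0 : 0 ≤ Mg := (abs_nonneg _).trans (hMg 0)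
  have hMw0 : 0 ≤ Mw := (abs_nonneg _).trans (hMw 0)
  have hpointwise : ∀ u, ‖(g (t - u) - g (s - u)) ^ 2 * w u‖ₑ ≤
      ENNReal.ofReal (2 * Mg * Mw) * edist (g (s - u + (t - s))) (g (s - u)) := fun u => by
    set Δ := g (t - u) - g (s - u)
    have hΔ : |Δ| ≤ 2 * Mg := (abs_sub _ _).trans (by linarith [hMg (t - u), hMg (s - u)])
    rw [Real.enorm_eq_ofReal_abs, edist_dist, Real.dist_eq, sub_add_sub_cancel',
      ← ENNReal.ofReal_mul (by positivity)]
    refine ENNReal.ofReal_le_ofReal ?_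
    calc |Δ ^ 2 * w u| = |Δ| * |Δ| * |w u| := by rw [abs_mul, abs_pow, sq]
      _ ≤ |Δ| * (2 * Mg) * Mw := by gcongr; exact hMw u
      _ = 2 * Mg * Mw * |Δ| := by ring
  have hlintegral : ‖∫ u, (g (t - u) - g (s - u)) ^ 2 * w u‖ₑ ≤
      ENNReal.ofReal (2 * Mg * Mw * (eVariationOn g Set.univ).toReal * |t - s|) :=
    calc _ ≤ ∫⁻ u, ‖(g (t - u) - g (s - u)) ^ 2 * w u‖ₑ := enorm_integral_le_lintegral_enorm _
      _ ≤ ∫⁻ u, ENNReal.ofReal (2 * Mg * Mw) * edist (g (s - u + (t - s))) (g (s - u)) :=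
          lintegral_mono hpointwise
      _ = ENNReal.ofReal (2 * Mg * Mw) * ∫⁻ x, edist (g (x + (t - s))) (g x) := by
          rw [lintegral_const_mul' _ _ ENNReal.ofReal_ne_top,
            lintegral_sub_left_eq_self (fun x => edist (g (x + (t - s))) (g x)) s]
      _ ≤ ENNReal.ofReal (2 * Mg * Mw) * (eVariationOn g Set.univ * ENNReal.ofReal |t - s|) := by
          gcongr; exact eVariationOn.lintegral_edist_add_le g (t - s)
      _ = _ := by
          rw [← ENNReal.ofReal_toReal hg, ← ENNReal.ofReal_mul ENNReal.toReal_nonneg,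
            ← ENNReal.ofReal_mul (by positivity), ENNReal.toReal_ofReal ENNReal.toReal_nonneg]
          ring_nf
  rw [Real.enorm_eq_ofReal_abs, ENNReal.ofReal_le_ofReal_iff (by positivity)] at hlintegral
  exact (le_abs_self _).trans hlintegral

theorem stmt14_general (g f : ℝ → ℝ)
    (hg_bv : BoundedVariationOn g Set.univ)
    (hg_bdd : ∃ c : ℝ, ∀ x, |g x| ≤ c)
    (hf0 : ∀ x, 0 ≤ f x) (hf_bdd : ∃ c : ℝ, ∀ x, f x ≤ c) :
    (∀ Mg Mf : ℝ, (∀ x, |g x| ≤ Mg) → (∀ x, f x ≤ Mf) →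
      ∀ s t : ℝ, ∫ u, (g (t - u) - g (s - u)) ^ 2 * f u ≤
        2 * Mg * Mf * (eVariationOn g Set.univ).toReal * |t - s|) ∧
    (∀ ε : ℝ, 0 < ε → ∃ δ : ℝ, 0 < δ ∧ ∀ s t : ℝ, |s - t| < δ →
      Real.sqrt (∫ u, (g (t - u) - g (s - u)) ^ 2 * f u) < ε) := by
  have hbound : ∀ Mg Mf : ℝ, (∀ x, |g x| ≤ Mg) → (∀ x, f x ≤ Mf) →
      ∀ s t : ℝ, ∫ u, (g (t - u) - g (s - u)) ^ 2 * f u ≤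
        2 * Mg * Mf * (eVariationOn g Set.univ).toReal * |t - s| := fun Mg Mf hMg hMf =>
    integral_sq_sub_comp_sub_mul_le hg_bv hMg fun x => (abs_of_nonneg (hf0 x)).trans_le (hMf x)
  refine ⟨hbound, fun ε hε => ?_⟩
  obtain ⟨cg, hcg⟩ := hg_bdd
  obtain ⟨cf, hcf⟩ := hf_bdd
  set C := 2 * cg * cf * (eVariationOn g Set.univ).toReal
  have hC : 0 ≤ C := by
    have := (abs_nonneg _).trans (hcg 0)
    have := (hf0 0).trans (hcf 0)
    positivity
  refine ⟨ε ^ 2 / (C + 1), by positivity, fun s t hst => (Real.sqrt_lt' hε).2 ?_⟩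
  calc _ ≤ C * |t - s| := hbound cg cf hcg hcf s t
    _ ≤ C * (ε ^ 2 / (C + 1)) := by rw [abs_sub_comm]; gcongr
    _ < ε ^ 2 := by
        rw [← mul_div_assoc, div_lt_iff₀ (by positivity)]
        nlinarith [pow_pos hε 2]

/-- Let `g : ℝ → ℝ` be bounded, right-continuous, of bounded variation with total
variation `T_g` and `g(x) → 0` as `x → −∞`, and let `f` be a bounded probability density. Then
`∫ (g(t−u) − g(s−u))² f(u) du ≤ 2 ‖g‖_∞ ‖f‖_∞ T_g |t − s|` (stated with arbitrary upper bounds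
`Mg ≥ ‖g‖_∞`, `Mf ≥ ‖f‖_∞`), and consequently the identity map from `(ℝ, |·|)` to `(ℝ, ρ)` with
`ρ(s,t) = (∫ (g(t−u) − g(s−u))² f(u) du)^{1/2}` is uniformly continuous. -/
theorem stmt14 (g f : ℝ → ℝ)
    (hg_bv : BoundedVariationOn g Set.univ)
    (hg_rc : ∀ x : ℝ, ContinuousWithinAt g (Set.Ici x) x)
    (hg_lim : Tendsto g atBot (nhds 0))
    (hg_bdd : ∃ c : ℝ, ∀ x, |g x| ≤ c)
    (hf0 : ∀ x, 0 ≤ f x) (hf_bdd : ∃ c : ℝ, ∀ x, f x ≤ c)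
    (hf_meas : Measurable f) (hf_int : Integrable f) (hf_dens : ∫ x, f x = 1) :
    (∀ Mg Mf : ℝ, (∀ x, |g x| ≤ Mg) → (∀ x, f x ≤ Mf) →
      ∀ s t : ℝ, ∫ u, (g (t - u) - g (s - u)) ^ 2 * f u ≤
        2 * Mg * Mf * (eVariationOn g Set.univ).toReal * |t - s|) ∧
    (∀ ε : ℝ, 0 < ε → ∃ δ : ℝ, 0 < δ ∧ ∀ s t : ℝ, |s - t| < δ →
      Real.sqrt (∫ u, (g (t - u) - g (s - u)) ^ 2 * f u) < ε) :=
  stmt14_general g f hg_bv hg_bdd hf0 hf_bdd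
end

section
/- Let k ≥ 1 be an integer, let f ∈ C^k(ℝ^d) have all partial derivatives of order at most k bounded, and let K : ℝ^d → ℝ be integrable with ∫_{ℝ^d} K(t) dt = 1, ∫_{ℝ^d} |t|^k |K(t)| dt < ∞, and ∫_{ℝ^d} t_1^{s_1} ⋯ t_d^{s_d} K(t) dt = 0 for all nonnegative integers s_1, …, s_d with 1 ≤ s_1 + ⋯ + s_d ≤ k. Then there is a constant C < ∞ such that for all t ∈ ℝ^d and all h > 0, | ∫_{ℝ^d} K_h(t − u) f(u) du − f(t) | ≤ C h^{k/d}. -/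
/-!
Substituting `u = t - c • v` with `c = h ^ (1 / d)` turns the smoothed value into
`∫ K(v) f(t - c • v) dv`, since `c ^ d = h`. Expand `f (t - c • v)` by Taylor's formula of order
`k` at `t`: the Taylor polynomial is a sum of homogeneous forms of degree `< k`, each a combination
of monomials, so `∫ K = 1` and the vanishing moments make `K` integrate it to `f t`. The remainder
is at most `C |c| ^ k ‖v‖ ^ k / (k - 1)!` with `C` a bound on the `k`-th derivative, and
integrating it against `|K|` gives the bound `C' c ^ k = C' h ^ (k / d)`.
-/

open MeasureTheory Finset
open scoped Nat

section Taylor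

variable {E F : Type*} [NormedAddCommGroup E] [NormedSpace ℝ E]
  [NormedAddCommGroup F] [NormedSpace ℝ F]

noncomputable def taylorSeries (f : E → F) (x : E) : FormalMultilinearSeries ℝ E F :=
  fun i => (i ! : ℝ)⁻¹ • iteratedFDeriv ℝ i f x

theorem norm_sub_partialSum_taylorSeries_le [CompleteSpace F] {n : ℕ} {f : E → F}
    (hf : ContDiff ℝ (n + 1) f) {C : ℝ} (hC : ∀ x, ‖iteratedFDeriv ℝ (n + 1) f x‖ ≤ C)
    (x y : E) :
    ‖f (x + y) - (taylorSeries f x).partialSum (n + 1) y‖ ≤ (n ! : ℝ)⁻¹ * (C * ‖y‖ ^ (n + 1)) := by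
  rw [map_add_eq_sum_add_integral_iteratedFDeriv fun t _ => hf.contDiffAt]
  simp only [taylorSeries, FormalMultilinearSeries.partialSum, smul_apply,
    add_sub_cancel_left, norm_smul, Real.norm_of_nonneg (inv_nonneg.2 (Nat.cast_nonneg _))]
  have hbound : ∀ t ∈ Set.uIoc (0 : ℝ) 1,
      ‖(1 - t) ^ n • iteratedFDeriv ℝ (n + 1) f (x + t • y) (fun _ => y)‖ ≤ C * ‖y‖ ^ (n + 1) := by
    intro t ht
    rw [Set.uIoc_of_le zero_le_one] at ht
    rw [norm_smul, norm_pow, Real.norm_of_nonneg (by linarith [ht.2])]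
    calc (1 - t) ^ n * ‖iteratedFDeriv ℝ (n + 1) f (x + t • y) fun _ => y‖
        ≤ 1 * (C * ‖y‖ ^ (n + 1)) := by
          gcongr
          · exact pow_le_one₀ (by linarith [ht.2]) (by linarith [ht.1])
          · exact (iteratedFDeriv ℝ (n + 1) f (x + t • y)).le_opNorm_mul_pow_of_le
              (pi_norm_const_le y) |>.trans (by gcongr; exact hC _)
      _ = C * ‖y‖ ^ (n + 1) := one_mul _
  gcongr
  simpa using intervalIntegral.norm_integral_le_of_norm_le_const hbound

end Taylor

section Moments

variable {E : Type*} [NormedAddCommGroup E] [MeasurableSpace E]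
  {μ : Measure E} {K : E → ℝ} {k : ℕ}

theorem integrable_mul_of_abs_le_mul_pow (hK : Integrable K μ)
    (hKk : Integrable (fun v => ‖v‖ ^ k * |K v|) μ) {i : ℕ} (hik : i ≤ k) {ψ : E → ℝ}
    (hψ : AEStronglyMeasurable ψ μ) {A : ℝ} (hψA : ∀ v, |ψ v| ≤ A * ‖v‖ ^ i) :
    Integrable (fun v => K v * ψ v) μ := by
  refine ((hK.abs.add hKk).const_mul |A|).mono' (hK.aestronglyMeasurable.mul hψ)
    (.of_forall fun v => ?_)
  have hpow : ‖v‖ ^ i ≤ 1 + ‖v‖ ^ k := by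
    rcases le_total ‖v‖ 1 with hv | hv
    · linarith [pow_le_one₀ (norm_nonneg v) hv (n := i), pow_nonneg (norm_nonneg v) k]
    · linarith [pow_le_pow_right₀ hv hik]
  calc ‖K v * ψ v‖ = |K v| * |ψ v| := by rw [Real.norm_eq_abs, abs_mul]
    _ ≤ |K v| * (|A| * (1 + ‖v‖ ^ k)) := by
        gcongr
        exact (hψA v).trans (mul_le_mul (le_abs_self A) hpow (by positivity) (abs_nonneg A))
    _ = |A| * (|K v| + ‖v‖ ^ k * |K v|) := by ring

variable [NormedSpace ℝ E] [OpensMeasurableSpace E]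

theorem integrable_mul_multilinear (hK : Integrable K μ)
    (hKk : Integrable (fun v => ‖v‖ ^ k * |K v|) μ) {i : ℕ} (hik : i ≤ k)
    (m : ContinuousMultilinearMap ℝ (fun _ : Fin i => E) ℝ) :
    Integrable (fun v => K v * m (fun _ => v)) μ :=
  integrable_mul_of_abs_le_mul_pow hK hKk hik
    (m.coe_continuous.comp (continuous_pi fun _ => continuous_id)).aestronglyMeasurable
    fun v => m.le_opNorm_mul_pow_of_le (pi_norm_const_le v)

theorem integrable_mul_partialSum (hK : Integrable K μ)
    (hKk : Integrable (fun v => ‖v‖ ^ k * |K v|) μ) {n : ℕ} (hnk : n ≤ k + 1)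
    (p : FormalMultilinearSeries ℝ E ℝ) :
    Integrable (fun v => K v * p.partialSum n v) μ := by
  simp only [FormalMultilinearSeries.partialSum, mul_sum]
  exact integrable_finsetSum _ fun i hi =>
    integrable_mul_multilinear hK hKk (by have := mem_range.1 hi; omega) (p i)

end Moments

section Euclidean

variable {ι : Type*} [Fintype ι] {K : EuclideanSpace ℝ ι → ℝ} {k : ℕ}

theorem integral_mul_multilinear_eq_zero (hK : Integrable K)
    (hKk : Integrable (fun v => ‖v‖ ^ k * |K v|))
    (hmom : ∀ s : ι → ℕ, 1 ≤ ∑ j, s j → ∑ j, s j ≤ k → ∫ v, (∏ j, v j ^ s j) * K v = 0)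
    {i : ℕ} (hi : 1 ≤ i) (hik : i ≤ k)
    (m : ContinuousMultilinearMap ℝ (fun _ : Fin i => EuclideanSpace ℝ ι) ℝ) :
    ∫ v, K v * m (fun _ => v) = 0 := by
  classical
  let b := EuclideanSpace.basisFun ι ℝ
  let s (g : Fin i → ι) (j : ι) : ℕ := #{l | g l = j}
  have hexpand (v : EuclideanSpace ℝ ι) :
      m (fun _ => v) = ∑ g : Fin i → ι, m (fun l => b (g l)) * ∏ j, v j ^ s g j := by
    conv_lhs => rw [← b.sum_repr v]
    rw [m.map_sum]
    refine sum_congr rfl fun g _ => ?_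
    rw [m.map_smul_univ, smul_eq_mul, mul_comm, ← prod_fiberwise' univ g]
    simp [b, s]
  have hdeg (g : Fin i → ι) : ∑ j, s g j = i := by
    simpa [s] using (card_eq_sum_card_fiberwise (f := g) (s := univ) (t := univ)
      fun _ _ => mem_univ _).symm
  have hmonomial (g : Fin i → ι) :
      Integrable fun v : EuclideanSpace ℝ ι => K v * ∏ j, v j ^ s g j := by
    refine integrable_mul_of_abs_le_mul_pow hK hKk hik ?_ (A := 1) fun v => ?_
    · exact (continuous_finsetProd _ fun j _ =>
        ((continuous_apply j).comp (PiLp.continuous_ofLp 2 _)).pow _).aestronglyMeasurable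
    · calc |∏ j, v j ^ s g j| = ∏ j, |v j| ^ s g j := by simp [abs_prod]
        _ ≤ ∏ j, ‖v‖ ^ s g j := by
            gcongr with j; exact PiLp.norm_apply_le v j
        _ = 1 * ‖v‖ ^ i := by rw [prod_pow_eq_pow_sum, hdeg, one_mul]
  simp_rw [hexpand, mul_sum]
  rw [integral_finsetSum _ fun g _ => ((hmonomial g).const_mul (m fun l => b (g l))).congr
    (.of_forall fun v => by ring)]
  refine sum_eq_zero fun g _ => ?_
  simp_rw [mul_left_comm (K _), integral_const_mul, mul_comm (K _)]
  rw [hmom (s g) (by rw [hdeg]; exact hi) (by rw [hdeg]; exact hik), mul_zero]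

theorem integral_mul_partialSum (hK : Integrable K)
    (hKk : Integrable (fun v => ‖v‖ ^ k * |K v|)) (hK1 : ∫ v, K v = 1)
    (hmom : ∀ s : ι → ℕ, 1 ≤ ∑ j, s j → ∑ j, s j ≤ k → ∫ v, (∏ j, v j ^ s j) * K v = 0)
    {n : ℕ} (hn : 1 ≤ n) (hnk : n ≤ k + 1) (p : FormalMultilinearSeries ℝ (EuclideanSpace ℝ ι) ℝ) :
    ∫ v, K v * p.partialSum n v = p 0 0 := by
  obtain ⟨n, rfl⟩ := Nat.exists_eq_add_of_le' hn
  simp only [FormalMultilinearSeries.partialSum, mul_sum]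
  rw [integral_finsetSum _ fun i hi =>
      integrable_mul_multilinear hK hKk (by have := mem_range.1 hi; omega) (p i),
    sum_range_succ', sum_eq_zero fun i hi => integral_mul_multilinear_eq_zero hK hKk hmom
      i.succ_pos (by have := mem_range.1 hi; omega) (p (i + 1)), zero_add]
  simp_rw [Subsingleton.elim (fun _ : Fin 0 => _) 0, mul_comm (K _)]
  rw [integral_const_mul, hK1, mul_one]

theorem exists_abs_integral_mul_comp_sub_smul_sub_le (hK : Integrable K)
    (hKk : Integrable (fun v => ‖v‖ ^ k * |K v|)) (hK1 : ∫ v, K v = 1)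
    (hmom : ∀ s : ι → ℕ, 1 ≤ ∑ j, s j → ∑ j, s j ≤ k → ∫ v, (∏ j, v j ^ s j) * K v = 0)
    (hk : 1 ≤ k) {f : EuclideanSpace ℝ ι → ℝ} (hf : ContDiff ℝ k f) {C : ℝ}
    (hC : ∀ x, ‖iteratedFDeriv ℝ k f x‖ ≤ C) :
    ∃ A, ∀ (t : EuclideanSpace ℝ ι) (c : ℝ), |(∫ v, K v * f (t - c • v)) - f t| ≤ A * |c| ^ k := by
  obtain ⟨n, rfl⟩ := Nat.exists_eq_add_of_le' hk
  refine ⟨(n ! : ℝ)⁻¹ * C * ∫ v, ‖v‖ ^ (n + 1) * |K v|, fun t c => ?_⟩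
  -- `P` is the Taylor polynomial of `f` at `t`, evaluated at `-c • v`
  let P := (taylorSeries f t).compContinuousLinearMap (-c • ContinuousLinearMap.id ℝ _)
  have hremainder (v : EuclideanSpace ℝ ι) : |f (t - c • v) - P.partialSum (n + 1) v| ≤
      (n ! : ℝ)⁻¹ * C * |c| ^ (n + 1) * ‖v‖ ^ (n + 1) := by
    have htaylor := norm_sub_partialSum_taylorSeries_le (by exact_mod_cast hf) hC t (-c • v)
    rw [neg_smul, ← sub_eq_add_neg, ← neg_smul, norm_smul, norm_neg, mul_pow] at htaylor
    exact htaylor.trans_eq (by rw [Real.norm_eq_abs]; ring)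
  have hRint : Integrable fun v => K v * (f (t - c • v) - P.partialSum (n + 1) v) :=
    integrable_mul_of_abs_le_mul_pow hK hKk le_rfl
      ((hf.continuous.comp (continuous_const.sub (continuous_const_smul c))).sub
        (P.partialSum_continuous _)).aestronglyMeasurable hremainder
  have hPint := integrable_mul_partialSum hK hKk (n := n + 1) (Nat.le_succ _) P (μ := volume)
  have hP : ∫ v, K v * P.partialSum (n + 1) v = f t := by
    rw [integral_mul_partialSum hK hKk hK1 hmom le_add_self (Nat.le_succ _)]
    simp [P, taylorSeries]
  have hsplit : ∫ v, K v * f (t - c • v) = (∫ v, K v * (f (t - c • v) - P.partialSum (n + 1) v))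
      + ∫ v, K v * P.partialSum (n + 1) v := by
    rw [← integral_add hRint hPint]
    simp_rw [mul_sub, sub_add_cancel]
  calc |(∫ v, K v * f (t - c • v)) - f t|
      = |∫ v, K v * (f (t - c • v) - P.partialSum (n + 1) v)| := by
        rw [hsplit, hP, add_sub_cancel_right]
    _ ≤ ∫ v, |K v * (f (t - c • v) - P.partialSum (n + 1) v)| := abs_integral_le_integral_abs
    _ ≤ ∫ v, (n ! : ℝ)⁻¹ * C * |c| ^ (n + 1) * (‖v‖ ^ (n + 1) * |K v|) := by
        refine integral_mono hRint.abs (hKk.const_mul _) fun v => ?_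
        rw [abs_mul, mul_comm]
        convert mul_le_mul_of_nonneg_right (hremainder v) (abs_nonneg (K v)) using 1
        ring
    _ = (n ! : ℝ)⁻¹ * C * (∫ v, ‖v‖ ^ (n + 1) * |K v|) * |c| ^ (n + 1) := by
        rw [integral_const_mul]; ring

end Euclidean

theorem integral_mul_comp_inv_smul_sub {E : Type*} [NormedAddCommGroup E] [NormedSpace ℝ E]
    [MeasurableSpace E] [BorelSpace E] [FiniteDimensional ℝ E] (μ : Measure E)
    [μ.IsAddHaarMeasure] (K f : E → ℝ) (t : E) {c : ℝ} (hc : c ≠ 0) :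
    ∫ u, K (c⁻¹ • (t - u)) * f u ∂μ = |c ^ Module.finrank ℝ E| * ∫ v, K v * f (t - c • v) ∂μ := by
  rw [← integral_sub_left_eq_self _ μ t, ← smul_eq_mul (a := |_|),
    ← Measure.integral_comp_inv_smul μ (fun v => K v * f (t - c • v)) c]
  simp [smul_inv_smul₀ hc]

/-- Let `f ∈ C^k(ℝ^d)` have all partial derivatives of order at most `k` bounded,
and let `K` be integrable with `∫ K = 1`, `∫ |t|^k |K(t)| dt < ∞` and vanishing moments
`∫ t_1^{s_1} ⋯ t_d^{s_d} K(t) dt = 0` for `1 ≤ s_1 + ⋯ + s_d ≤ k`. Then there is `C < ∞` with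
`|∫ K_h(t − u) f(u) du − f(t)| ≤ C h^{k/d}` for all `t ∈ ℝ^d`, `h > 0`, where
`K_h(t) = h^{−1} K(t/h^{1/d})`. -/
theorem stmt15 (d k : ℕ) (hd : 1 ≤ d) (hk : 1 ≤ k)
    (f K : EuclideanSpace ℝ (Fin d) → ℝ)
    (hf_smooth : ContDiff ℝ (k : ℕ∞) f)
    (hf_bd : ∀ i : ℕ, i ≤ k → ∃ Ci : ℝ, ∀ x, ‖iteratedFDeriv ℝ i f x‖ ≤ Ci)
    (hK_int : Integrable K)
    (hK_one : (∫ t : EuclideanSpace ℝ (Fin d), K t) = 1)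
    (hK_mom : Integrable (fun t : EuclideanSpace ℝ (Fin d) => ‖t‖ ^ k * |K t|))
    (hK_van : ∀ s : Fin d → ℕ, 1 ≤ ∑ j, s j → (∑ j, s j) ≤ k →
      (∫ t : EuclideanSpace ℝ (Fin d), (∏ j, (t j) ^ (s j)) * K t) = 0) :
    ∃ C : ℝ, ∀ (t : EuclideanSpace ℝ (Fin d)) (h : ℝ), 0 < h →
      |(∫ u, (h⁻¹ * K ((h ^ ((1 : ℝ) / d))⁻¹ • (t - u))) * f u) - f t| ≤
        C * h ^ ((k : ℝ) / d) := by
  obtain ⟨C, hC⟩ := hf_bd k le_rfl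
  obtain ⟨A, hA⟩ := exists_abs_integral_mul_comp_sub_smul_sub_le hK_int hK_mom hK_one hK_van hk
    hf_smooth hC
  refine ⟨A, fun t h hh => ?_⟩
  set c := h ^ ((1 : ℝ) / d) with hc_def
  have hc : 0 < c := by positivity
  have hcd : c ^ d = h := by
    rw [hc_def, one_div, Real.rpow_inv_natCast_pow hh.le (by omega)]
  have hck : c ^ k = h ^ ((k : ℝ) / d) := by
    rw [hc_def, ← Real.rpow_mul_natCast hh.le]
    ring_nf
  have hrescale : ∫ u, (h⁻¹ * K (c⁻¹ • (t - u))) * f u = ∫ v, K v * f (t - c • v) := by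
    simp_rw [mul_assoc, integral_const_mul, integral_mul_comp_inv_smul_sub volume K f t hc.ne',
      finrank_euclideanSpace_fin, hcd, abs_of_pos hh, inv_mul_cancel_left₀ hh.ne']
  calc |(∫ u, (h⁻¹ * K (c⁻¹ • (t - u))) * f u) - f t| ≤ A * |c| ^ k := hrescale ▸ hA t c
    _ = A * h ^ ((k : ℝ) / d) := by rw [abs_of_pos hc, hck]
end
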